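/- arXiv:2301.11042 — 4 statements merged into one kernel-verified Lean document; each statement's English description precedes it below -/
import Mathlib

section
/- Let U be an infinite set of vertices in a connected countable graph G. Then G contains either a U-star (a subdivision of the infinite star K_{1,ω} all of whose leaves lie in U) or a U-comb (the union of a ray R with infinitely many pairwise disjoint, possibly trivial, U–R paths). -/
/-!
Root a breadth-first spanning tree of `G` at a vertex `v₀`: every vertex `v ≠ v₀` gets a
neighbour one step closer to `v₀` as its parent. If some vertex has infinitely many children
whose subtrees meet `U`, joining it through these children to vertices of `U` in their (disjoint)
subtrees gives a `U`-star. Otherwise König's argument yields a ray from `v₀` down the tree all of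
whose subtrees meet `U` infinitely; choosing `U`-vertices in ever deeper subtrees along the ray
and walking from each up the tree until it hits the ray gives the teeth of a `U`-comb, which are
disjoint because they live in disjoint depth ranges.
-/

/-- A ray in `G`: a one-way infinite path, given by an injective sequence of
successively adjacent vertices. -/
def IsRay {α : Type*} (G : SimpleGraph α) (r : ℕ → α) : Prop :=
  Function.Injective r ∧ ∀ n, G.Adj (r n) (r (n + 1))

/-- The set of vertices of a walk. -/
def walkVerts {α : Type*} {G : SimpleGraph α} {a b : α} (p : G.Walk a b) : Set α :=
  {x | x ∈ p.support}

/-- A `U`-star in `G`: a subdivision of the infinite star `K_{1,ω}` all of whose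
leaves lie in `U`, i.e. a centre `c` together with infinitely many paths from `c`
to distinct vertices of `U`, any two of which meet exactly in `c`. -/
def HasUStar {α : Type*} (G : SimpleGraph α) (U : Set α) : Prop :=
  ∃ (c : α) (u : ℕ → α) (P : ∀ n, G.Walk c (u n)),
    Function.Injective u ∧ (∀ n, u n ∈ U) ∧ (∀ n, u n ≠ c) ∧
    (∀ n, (P n).IsPath) ∧
    ∀ m n, m ≠ n → walkVerts (P m) ∩ walkVerts (P n) = {c}

/-- A `U`-comb in `G`: the union of a ray `r` with infinitely many pairwise
disjoint (possibly trivial) paths from `U` to the ray, each meeting the ray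
exactly in its last vertex. -/
def HasUComb {α : Type*} (G : SimpleGraph α) (U : Set α) : Prop :=
  ∃ r : ℕ → α, IsRay G r ∧
    ∃ (a b : ℕ → α) (P : ∀ n, G.Walk (a n) (b n)),
      (∀ n, a n ∈ U) ∧ (∀ n, b n ∈ Set.range r) ∧ (∀ n, (P n).IsPath) ∧
      (∀ n, walkVerts (P n) ∩ Set.range r = {b n}) ∧
      ∀ m n, m ≠ n → Disjoint (walkVerts (P m)) (walkVerts (P n))

theorem walkVerts_reverse {α : Type*} {G : SimpleGraph α} {a b : α} (p : G.Walk a b) :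
    walkVerts p.reverse = walkVerts p := by
  ext
  simp [walkVerts]

namespace SimpleGraph

variable {α : Type*} {G : SimpleGraph α} {v₀ : α}

theorem Reachable.exists_adj_dist_add_one_eq {v : α} (h : G.Reachable v v₀) (hv : v ≠ v₀) :
    ∃ w, G.Adj v w ∧ G.dist v₀ w + 1 = G.dist v₀ v := by
  obtain ⟨p, hp⟩ := h.exists_walk_length_eq_dist
  cases p with
  | nil => exact absurd rfl hv
  | @cons _ w _ hvw q =>
    refine ⟨w, hvw, le_antisymm ?_ ?_⟩
    · have : G.dist v₀ w ≤ q.length := dist_comm (G := G) ▸ dist_le q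
      rw [Walk.length_cons, dist_comm] at hp
      omega
    · rcases hvw.symm.diff_dist_adj (u := v₀) with h | h | h <;> omega

open Classical in
/-- The parent of `v` in a breadth-first spanning tree rooted at `v₀`; the root is its own
parent. -/
noncomputable def bfsParent (G : SimpleGraph α) (v₀ v : α) : α :=
  if h : ∃ w, G.Adj v w ∧ G.dist v₀ w + 1 = G.dist v₀ v then h.choose else v₀

theorem bfsParent_spec (hG : G.Connected) {v : α} (hv : v ≠ v₀) :
    G.Adj v (G.bfsParent v₀ v) ∧ G.dist v₀ (G.bfsParent v₀ v) + 1 = G.dist v₀ v := by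
  have h := (hG v v₀).exists_adj_dist_add_one_eq hv
  rw [bfsParent, dif_pos h]
  exact h.choose_spec

@[simp]
theorem bfsParent_self : G.bfsParent v₀ v₀ = v₀ := by
  rw [bfsParent, dif_neg]
  rintro ⟨w, -, hw⟩
  simp at hw

theorem dist_bfsParent (hG : G.Connected) (v : α) :
    G.dist v₀ (G.bfsParent v₀ v) = G.dist v₀ v - 1 := by
  by_cases hv : v = v₀
  · simp [hv]
  · have := (bfsParent_spec hG hv).2
    omega

theorem dist_iterate_bfsParent (hG : G.Connected) (k : ℕ) (v : α) :
    G.dist v₀ ((G.bfsParent v₀)^[k] v) = G.dist v₀ v - k := by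
  induction k with
  | zero => simp
  | succ k ih => rw [Function.iterate_succ_apply', dist_bfsParent hG, ih]; omega

theorem iterate_bfsParent_of_dist_le (hG : G.Connected) {k : ℕ} {v : α}
    (hk : G.dist v₀ v ≤ k) : (G.bfsParent v₀)^[k] v = v₀ := by
  refine (hG.dist_eq_zero_iff.mp ?_).symm
  rw [dist_iterate_bfsParent hG]
  omega

theorem iterate_bfsParent_eq_of_dist_eq (hG : G.Connected) {a b : ℕ} {v : α}
    (h : G.dist v₀ ((G.bfsParent v₀)^[a] v) = G.dist v₀ ((G.bfsParent v₀)^[b] v)) :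
    (G.bfsParent v₀)^[a] v = (G.bfsParent v₀)^[b] v := by
  rw [dist_iterate_bfsParent hG, dist_iterate_bfsParent hG] at h
  obtain rfl | ⟨ha, hb⟩ : a = b ∨ G.dist v₀ v ≤ a ∧ G.dist v₀ v ≤ b := by omega
  · rfl
  · rw [iterate_bfsParent_of_dist_le hG ha, iterate_bfsParent_of_dist_le hG hb]

theorem exists_isPath_iterate_bfsParent (hG : G.Connected) {k : ℕ} {u : α}
    (hk : k ≤ G.dist v₀ u) :
    ∃ p : G.Walk u ((G.bfsParent v₀)^[k] u), p.IsPath ∧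
      walkVerts p = {z | ∃ i ≤ k, (G.bfsParent v₀)^[i] u = z} := by
  induction k generalizing u with
  | zero => exact ⟨.nil, .nil, by ext; simp [walkVerts, eq_comm]⟩
  | succ k ih =>
    have hu : u ≠ v₀ := by rintro rfl; simp at hk
    obtain ⟨p, hp, hverts⟩ := ih (u := G.bfsParent v₀ u) (by rw [dist_bfsParent hG]; omega)
    have hmem (z : α) : z ∈ p.support ↔ ∃ i ≤ k, (G.bfsParent v₀)^[i] (G.bfsParent v₀ u) = z :=
      Set.ext_iff.mp hverts z
    refine ⟨.cons (bfsParent_spec hG hu).1 p, hp.cons fun hup => ?_, ?_⟩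
    · obtain ⟨i, -, hi⟩ := (hmem u).mp hup
      have := congrArg (G.dist v₀) hi
      rw [dist_iterate_bfsParent hG, dist_bfsParent hG] at this
      omega
    · show {z | z ∈ u :: p.support} = _
      ext z
      simp only [List.mem_cons, Set.mem_ofPred_eq, hmem]
      constructor
      · rintro (rfl | ⟨i, hi, rfl⟩)
        exacts [⟨0, by omega, rfl⟩, ⟨i + 1, by omega, rfl⟩]
      · rintro ⟨_ | i, hi, rfl⟩
        exacts [Or.inl rfl, Or.inr ⟨i, by omega, rfl⟩]

theorem exists_isPath_of_iterate_bfsParent_eq (hG : G.Connected) {k : ℕ} {u x : α}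
    (hk : k ≤ G.dist v₀ u) (hx : (G.bfsParent v₀)^[k] u = x) :
    ∃ p : G.Walk u x, p.IsPath ∧ walkVerts p = {z | ∃ i ≤ k, (G.bfsParent v₀)^[i] u = z} := by
  subst hx
  exact exists_isPath_iterate_bfsParent hG hk

def bfsDescendants (G : SimpleGraph α) (v₀ x : α) : Set α :=
  {u | ∃ k, (G.bfsParent v₀)^[k] u = x}

def bfsChildren (G : SimpleGraph α) (v₀ x : α) : Set α :=
  {y | G.bfsParent v₀ y = x ∧ y ≠ x}

theorem mem_bfsDescendants_root (hG : G.Connected) (u : α) : u ∈ G.bfsDescendants v₀ v₀ :=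
  ⟨_, iterate_bfsParent_of_dist_le hG le_rfl⟩

theorem dist_le_of_mem_bfsDescendants (hG : G.Connected) {x u : α}
    (hu : u ∈ G.bfsDescendants v₀ x) : G.dist v₀ x ≤ G.dist v₀ u := by
  obtain ⟨k, rfl⟩ := hu
  rw [dist_iterate_bfsParent hG]
  omega

theorem iterate_dist_sub_of_mem_bfsDescendants (hG : G.Connected) {x u : α}
    (hu : u ∈ G.bfsDescendants v₀ x) :
    (G.bfsParent v₀)^[G.dist v₀ u - G.dist v₀ x] u = x := by
  obtain ⟨k, rfl⟩ := hu
  apply iterate_bfsParent_eq_of_dist_eq hG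
  simp only [dist_iterate_bfsParent hG]
  omega

theorem disjoint_bfsDescendants (hG : G.Connected) {x y : α}
    (hd : G.dist v₀ x = G.dist v₀ y) (hxy : x ≠ y) :
    Disjoint (G.bfsDescendants v₀ x) (G.bfsDescendants v₀ y) := by
  refine Set.disjoint_left.mpr fun u ⟨a, ha⟩ ⟨b, hb⟩ => hxy ?_
  rw [← ha, ← hb] at hd ⊢
  exact iterate_bfsParent_eq_of_dist_eq hG hd

theorem exists_bfsChildren_of_mem_bfsDescendants {x u : α} (hu : u ∈ G.bfsDescendants v₀ x)
    (hux : u ≠ x) : ∃ y ∈ G.bfsChildren v₀ x, u ∈ G.bfsDescendants v₀ y := by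
  classical
  have hmin := Nat.find_min hu (m := Nat.find hu - 1)
  obtain ⟨k, hk⟩ : ∃ k, Nat.find hu = k + 1 := Nat.exists_eq_succ_of_ne_zero fun h0 =>
    hux (by simpa [h0] using Nat.find_spec hu)
  have hspec := Nat.find_spec hu
  rw [hk, Function.iterate_succ_apply'] at hspec
  exact ⟨_, ⟨hspec, fun h => hmin (by omega) (by simpa [hk] using h)⟩, k, rfl⟩

theorem ne_root_of_mem_bfsChildren {x y : α} (hy : y ∈ G.bfsChildren v₀ x) : y ≠ v₀ := by
  rintro rfl
  exact hy.2 (by simpa using hy.1)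

theorem adj_of_mem_bfsChildren (hG : G.Connected) {x y : α} (hy : y ∈ G.bfsChildren v₀ x) :
    G.Adj x y :=
  hy.1 ▸ (bfsParent_spec hG (ne_root_of_mem_bfsChildren hy)).1.symm

theorem dist_of_mem_bfsChildren (hG : G.Connected) {x y : α} (hy : y ∈ G.bfsChildren v₀ x) :
    G.dist v₀ y = G.dist v₀ x + 1 :=
  hy.1 ▸ (bfsParent_spec hG (ne_root_of_mem_bfsChildren hy)).2.symm

theorem exists_isPath_of_mem_bfsChildren (hG : G.Connected) {x y u : α}
    (hy : y ∈ G.bfsChildren v₀ x) (hu : u ∈ G.bfsDescendants v₀ y) :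
    ∃ p : G.Walk x u, p.IsPath ∧ walkVerts p ⊆ insert x (G.bfsDescendants v₀ y) := by
  obtain ⟨k, hk⟩ := hu
  have hkx : (G.bfsParent v₀)^[k + 1] u = x := by
    rw [Function.iterate_succ_apply', hk]
    exact hy.1
  have hkd : k + 1 ≤ G.dist v₀ u := by
    have := dist_iterate_bfsParent (v₀ := v₀) hG k u
    rw [hk, dist_of_mem_bfsChildren hG hy] at this
    omega
  obtain ⟨p, hp, hverts⟩ := exists_isPath_of_iterate_bfsParent_eq hG hkd hkx
  refine ⟨p.reverse, hp.reverse, ?_⟩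
  rw [walkVerts_reverse, hverts]
  rintro _ ⟨i, hi, rfl⟩
  rcases Nat.lt_or_ge i (k + 1) with hi' | hi'
  · refine Or.inr ⟨k - i, ?_⟩
    rw [← Function.iterate_add_apply, Nat.sub_add_cancel (by omega), hk]
  · exact Or.inl (by rw [show i = k + 1 by omega, hkx])

theorem hasUStar_of_infinite_bfsChildren (hG : G.Connected) {U : Set α} {x : α}
    (hx : {y ∈ G.bfsChildren v₀ x | (U ∩ G.bfsDescendants v₀ y).Nonempty}.Infinite) :
    HasUStar G U := by
  let y : ℕ → α := fun n => hx.natEmbedding _ n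
  have hyx (n : ℕ) : y n ∈ G.bfsChildren v₀ x := (hx.natEmbedding _ n).2.1
  have hdisj {m n : ℕ} (hmn : m ≠ n) :
      Disjoint (G.bfsDescendants v₀ (y m)) (G.bfsDescendants v₀ (y n)) :=
    disjoint_bfsDescendants hG (by rw [dist_of_mem_bfsChildren hG (hyx m),
      dist_of_mem_bfsChildren hG (hyx n)]) fun h => hmn ((hx.natEmbedding _).injective
        (Subtype.ext h))
  choose u huU huy using fun n => (hx.natEmbedding _ n).2.2
  have hux (n : ℕ) : u n ≠ x := fun h => by
    have := dist_le_of_mem_bfsDescendants hG (huy n)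
    rw [dist_of_mem_bfsChildren hG (hyx n), h] at this
    omega
  choose P hP hPsub using fun n => exists_isPath_of_mem_bfsChildren hG (hyx n) (huy n)
  refine ⟨x, u, P, fun m n hu => ?_, huU, hux, hP, fun m n hmn => ?_⟩
  · by_contra hmn
    exact Set.disjoint_left.mp (hdisj hmn) (huy m) (hu ▸ huy n)
  · refine Set.Subset.antisymm (fun z ⟨hzm, hzn⟩ => ?_) (by simp [walkVerts])
    rcases hPsub m hzm with rfl | hzm'
    · rfl
    rcases hPsub n hzn with rfl | hzn'
    · rfl
    exact absurd hzn' (Set.disjoint_left.mp (hdisj hmn) hzm')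

theorem exists_bfsChildren_infinite {U : Set α} {x : α}
    (hfin : {y ∈ G.bfsChildren v₀ x | (U ∩ G.bfsDescendants v₀ y).Nonempty}.Finite)
    (hx : (U ∩ G.bfsDescendants v₀ x).Infinite) :
    ∃ y ∈ G.bfsChildren v₀ x, (U ∩ G.bfsDescendants v₀ y).Infinite := by
  by_contra! h
  have hcover : (U ∩ G.bfsDescendants v₀ x) \ {x} ⊆
      ⋃ y ∈ {y ∈ G.bfsChildren v₀ x | (U ∩ G.bfsDescendants v₀ y).Nonempty},
        U ∩ G.bfsDescendants v₀ y := by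
    rintro u ⟨⟨huU, hux⟩, hne⟩
    obtain ⟨y, hy, huy⟩ := exists_bfsChildren_of_mem_bfsDescendants hux hne
    exact Set.mem_biUnion ⟨hy, u, huU, huy⟩ ⟨huU, huy⟩
  exact hx.sdiff (Set.finite_singleton x) ((hfin.biUnion fun y hy => h y hy.1).subset hcover)

theorem exists_bfsRay (hG : G.Connected) {U : Set α}
    (hfin : ∀ x, {y ∈ G.bfsChildren v₀ x | (U ∩ G.bfsDescendants v₀ y).Nonempty}.Finite)
    (hU : U.Infinite) :
    ∃ r : ℕ → α, r 0 = v₀ ∧ (∀ n, r (n + 1) ∈ G.bfsChildren v₀ (r n)) ∧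
      ∀ n, (U ∩ G.bfsDescendants v₀ (r n)).Infinite := by
  choose next hnext hnextU using fun x : {x // (U ∩ G.bfsDescendants v₀ x).Infinite} =>
    exists_bfsChildren_infinite (hfin x) x.2
  let s (n : ℕ) : {x // (U ∩ G.bfsDescendants v₀ x).Infinite} :=
    (fun x => ⟨next x, hnextU x⟩)^[n]
      ⟨v₀, by rwa [Set.inter_eq_left.mpr fun u _ => mem_bfsDescendants_root hG u]⟩
  refine ⟨fun n => (s n).1, rfl, fun n => ?_, fun n => (s n).2⟩
  simp only [s, Function.iterate_succ_apply']
  exact hnext _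

theorem dist_eq_of_bfsChildren (hG : G.Connected) {r : ℕ → α} (h0 : r 0 = v₀)
    (hr : ∀ n, r (n + 1) ∈ G.bfsChildren v₀ (r n)) (n : ℕ) : G.dist v₀ (r n) = n := by
  induction n with
  | zero => simp [h0]
  | succ n ih => rw [dist_of_mem_bfsChildren hG (hr n), ih]

theorem isRay_of_bfsChildren (hG : G.Connected) {r : ℕ → α} (h0 : r 0 = v₀)
    (hr : ∀ n, r (n + 1) ∈ G.bfsChildren v₀ (r n)) : IsRay G r := by
  refine ⟨fun m n h => ?_, fun n => adj_of_mem_bfsChildren hG (hr n)⟩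
  simpa only [dist_eq_of_bfsChildren hG h0 hr] using congrArg (G.dist v₀) h

theorem exists_isPath_to_bfsRay (hG : G.Connected) {r : ℕ → α}
    (hdist : ∀ n, G.dist v₀ (r n) = n) {t : ℕ} {u : α} (hu : u ∈ G.bfsDescendants v₀ (r t)) :
    ∃ b ∈ Set.range r, ∃ p : G.Walk u b, p.IsPath ∧ walkVerts p ∩ Set.range r = {b} ∧
      ∀ z ∈ walkVerts p, t ≤ G.dist v₀ z ∧ G.dist v₀ z ≤ G.dist v₀ u := by
  classical
  have hcanon := iterate_dist_sub_of_mem_bfsDescendants hG hu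
  rw [hdist] at hcanon
  have hex : ∃ i, (G.bfsParent v₀)^[i] u ∈ Set.range r := ⟨_, t, hcanon.symm⟩
  have hi : Nat.find hex ≤ G.dist v₀ u - t := Nat.find_min' hex ⟨t, hcanon.symm⟩
  have ht : t ≤ G.dist v₀ u := hdist t ▸ dist_le_of_mem_bfsDescendants hG hu
  obtain ⟨p, hp, hverts⟩ := exists_isPath_iterate_bfsParent (v₀ := v₀) hG
    (k := Nat.find hex) (u := u) (by omega)
  refine ⟨_, Nat.find_spec hex, p, hp, ?_, ?_⟩ <;> rw [hverts]
  · ext z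
    constructor
    · rintro ⟨⟨j, hj, rfl⟩, hz⟩
      rw [Set.mem_singleton_iff, le_antisymm hj (Nat.find_min' hex hz)]
    · rintro rfl
      exact ⟨⟨_, le_rfl, rfl⟩, Nat.find_spec hex⟩
  · rintro _ ⟨j, hj, rfl⟩
    rw [dist_iterate_bfsParent hG]
    omega

theorem hasUComb_of_bfsRay (hG : G.Connected) {U : Set α} {r : ℕ → α} (hr : IsRay G r)
    (hdist : ∀ n, G.dist v₀ (r n) = n) (hU : ∀ n, (U ∩ G.bfsDescendants v₀ (r n)).Nonempty) :
    HasUComb G U := by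
  choose f hf using hU
  -- the `n`-th tooth lies in the depth range `[t n, t (n + 1))`
  let t (n : ℕ) : ℕ := Nat.rec 0 (fun _ s => G.dist v₀ (f s) + 1) n
  have ht : StrictMono t := strictMono_nat_of_lt_succ fun n =>
    Nat.lt_succ_of_le (hdist (t n) ▸ dist_le_of_mem_bfsDescendants hG (hf (t n)).2)
  choose b hb P hP hPr hPdist using fun n => exists_isPath_to_bfsRay hG hdist (hf (t n)).2
  refine ⟨r, hr, fun n => f (t n), b, P, fun n => (hf (t n)).1, hb, hP, hPr, ?_⟩
  intro m n hmn
  wlog hlt : m < n generalizing m n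
  · exact (this n m hmn.symm (by omega)).symm
  refine Set.disjoint_left.mpr fun z hzm hzn => ?_
  have hm := (hPdist m z hzm).2
  have hn := (hPdist n z hzn).1
  have hmn' : t (m + 1) ≤ t n := ht.monotone hlt
  have htm : t (m + 1) = G.dist v₀ (f (t m)) + 1 := rfl
  omega

end SimpleGraph

theorem star_comb_lemma_general {α : Type} (G : SimpleGraph α) (hG : G.Connected)
    (U : Set α) (hU : U.Infinite) :
    HasUStar G U ∨ HasUComb G U := by
  obtain ⟨v₀⟩ := hG.nonempty
  by_cases h : ∃ x, {y ∈ G.bfsChildren v₀ x | (U ∩ G.bfsDescendants v₀ y).Nonempty}.Infinite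
  · obtain ⟨x, hx⟩ := h
    exact Or.inl (SimpleGraph.hasUStar_of_infinite_bfsChildren hG hx)
  · push Not at h
    obtain ⟨r, h0, hr, hrU⟩ := SimpleGraph.exists_bfsRay hG h hU
    exact Or.inr (SimpleGraph.hasUComb_of_bfsRay hG (SimpleGraph.isRay_of_bfsChildren hG h0 hr)
      (SimpleGraph.dist_eq_of_bfsChildren hG h0 hr) fun n => (hrU n).nonempty)

/-- **Star–comb lemma.** If `U` is an infinite set of vertices in a connected
countable graph `G`, then `G` contains a `U`-star or a `U`-comb. -/
theorem star_comb_lemma {α : Type} [Countable α] (G : SimpleGraph α) (hG : G.Connected)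
    (U : Set α) (hU : U.Infinite) :
    HasUStar G U ∨ HasUComb G U :=
  star_comb_lemma_general G hG U hU
end

section
/- Let P = Forb(H_1,...,H_k) be a minor-closed class of countable graphs, where each H_i is finite. Then a countable graph G has the property that G − F ∈ P for some finite vertex set F if and only if G contains none of ω·H_1, ..., ω·H_k as a minor, where ω·H denotes the disjoint union of countably infinitely many copies of H. -/
/-- `H` is a minor of `G`: there are nonempty, connected, pairwise disjoint
branch sets `B v ⊆ V(G)` for `v ∈ V(H)`, and for every edge `uv` of `H` an edge
of `G` joining `B u` to `B v`. -/
def IsMinor {α β : Type*} (H : SimpleGraph α) (G : SimpleGraph β) : Prop :=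
  ∃ B : α → Set β,
    (∀ v, (B v).Nonempty) ∧
    (∀ v, (G.induce (B v)).Connected) ∧
    (Pairwise fun u v => Disjoint (B u) (B v)) ∧
    ∀ ⦃u w⦄, H.Adj u w → ∃ a ∈ B u, ∃ b ∈ B w, G.Adj a b

/-- `ω · H`: the disjoint union of countably infinitely many copies of `H`. -/
def omegaCopies {α : Type*} (H : SimpleGraph α) : SimpleGraph (ℕ × α) :=
  SimpleGraph.fromRel (fun a b => a.1 = b.1 ∧ H.Adj a.2 b.2)

open SimpleGraph

noncomputable def induceInduceIso {α : Type*} (G : SimpleGraph α) (s : Set α) (t : Set s) :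
    (G.induce s).induce t ≃g G.induce (Subtype.val '' t) where
  toEquiv := Equiv.Set.image Subtype.val t Subtype.val_injective
  map_rel_iff' := by
    intro a b
    simp [Equiv.Set.image, Equiv.Set.imageOfInjOn]

lemma reachable_induce_of_support_subset {V : Type*} {Γ : SimpleGraph V} {x y : V}
    (w : Γ.Walk x y) (t : Set V) (h : ∀ z ∈ w.support, z ∈ t) :
    (Γ.induce t).Reachable ⟨x, h x w.start_mem_support⟩ ⟨y, h y w.end_mem_support⟩ := by
  induction w with
  | nil => exact Reachable.refl _
  | @cons u v z hadj p ih =>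
    have h' : ∀ a ∈ p.support, a ∈ t := fun a ha => h a (by simp [ha])
    have h1 : (Γ.induce t).Adj ⟨u, h u (by simp)⟩ ⟨v, h' v p.start_mem_support⟩ := by
      simpa using hadj
    exact h1.reachable.trans (ih h')

lemma exists_finite_connected_superset {V : Type*} {Γ : SimpleGraph V} (hΓ : Γ.Connected)
    (T : Set V) (hT : T.Finite) (x0 : V) :
    ∃ t : Set V, t.Finite ∧ T ⊆ t ∧ x0 ∈ t ∧ (Γ.induce t).Connected := by
  classical
  have hw : ∀ a : V, ∃ w : Γ.Walk x0 a, True := fun a => ⟨(hΓ.preconnected x0 a).some, trivial⟩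
  choose w _ using hw
  refine ⟨{x0} ∪ ⋃ a ∈ T, {z | z ∈ (w a).support}, ?_, ?_, ?_, ?_⟩
  · exact (Set.finite_singleton x0).union (hT.biUnion fun a _ => (w a).support.finite_toSet)
  · intro a ha
    exact Set.mem_union_right _ (Set.mem_biUnion ha (w a).end_mem_support)
  · exact Set.mem_union_left _ rfl
  · set t : Set V := {x0} ∪ ⋃ a ∈ T, {z | z ∈ (w a).support} with ht
    have hx0 : x0 ∈ t := Set.mem_union_left _ rfl
    rw [connected_iff_exists_forall_reachable]
    refine ⟨⟨x0, hx0⟩, ?_⟩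
    rintro ⟨u, hu⟩
    rcases hu with hu | hu
    · cases hu
      exact Reachable.refl _
    · obtain ⟨a, ha, hu⟩ := by simpa using hu
      have hsub : ∀ z ∈ ((w a).takeUntil u hu).support, z ∈ t := fun z hz =>
        Set.mem_union_right _ (Set.mem_biUnion ha ((w a).support_takeUntil_subset hu hz))
      exact reachable_induce_of_support_subset ((w a).takeUntil u hu) t hsub

/-- A model of `H` in `G` with all branch sets inside `S`. -/
def ModelIn {W α : Type*} (H : SimpleGraph W) (G : SimpleGraph α) (S : Set α) : Prop :=
  ∃ B : W → Set α,
    (∀ v, B v ⊆ S) ∧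
    (∀ v, (B v).Nonempty) ∧
    (∀ v, (G.induce (B v)).Connected) ∧
    (Pairwise fun u v => Disjoint (B u) (B v)) ∧
    ∀ ⦃u w⦄, H.Adj u w → ∃ a ∈ B u, ∃ b ∈ B w, G.Adj a b

lemma isMinor_induce_iff {W α : Type*} (H : SimpleGraph W) (G : SimpleGraph α) (S : Set α) :
    IsMinor H (G.induce S) ↔ ModelIn H G S := by
  constructor
  · rintro ⟨B, hne, hconn, hdisj, hedge⟩
    refine ⟨fun v => Subtype.val '' B v, fun v => Subtype.coe_image_subset _ _, fun v =>
      (hne v).image _, fun v => ?_, fun u v huv => ?_, ?_⟩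
    · exact ((induceInduceIso G S (B v)).connected_iff).mp (hconn v)
    · exact (Set.disjoint_image_iff Subtype.val_injective).mpr (hdisj huv)
    · intro u w huw
      obtain ⟨a, ha, b, hb, hab⟩ := hedge huw
      exact ⟨a, Set.mem_image_of_mem _ ha, b, Set.mem_image_of_mem _ hb, hab⟩
  · rintro ⟨B, hsub, hne, hconn, hdisj, hedge⟩
    refine ⟨fun v => Subtype.val ⁻¹' B v, fun v => ?_, fun v => ?_, fun u v huv =>
      Disjoint.preimage _ (hdisj huv), ?_⟩
    · obtain ⟨x, hx⟩ := hne v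
      exact ⟨⟨x, hsub v hx⟩, hx⟩
    · have him : Subtype.val '' (Subtype.val ⁻¹' B v : Set S) = B v := by
        rw [Subtype.image_preimage_coe]
        exact Set.inter_eq_right.mpr (hsub v)
      have := (induceInduceIso G S (Subtype.val ⁻¹' B v)).connected_iff
      rw [him] at this
      exact this.mpr (hconn v)
    · intro u w huw
      obtain ⟨a, ha, b, hb, hab⟩ := hedge huw
      exact ⟨⟨a, hsub u ha⟩, ha, ⟨b, hsub w hb⟩, hb, by simpa using hab⟩

lemma ModelIn.mono {W α : Type*} {H : SimpleGraph W} {G : SimpleGraph α} {S T : Set α}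
    (h : ModelIn H G S) (hST : S ⊆ T) : ModelIn H G T := by
  obtain ⟨B, hsub, h2, h3, h4, h5⟩ := h
  exact ⟨B, fun v => (hsub v).trans hST, h2, h3, h4, h5⟩

/-- Shrink a model of a finite graph to one with finite branch sets. -/
lemma ModelIn.finite {W α : Type*} [Fintype W] {H : SimpleGraph W} {G : SimpleGraph α}
    {S : Set α} (h : ModelIn H G S) :
    ∃ B : W → Set α,
      (∀ v, (B v).Finite) ∧
      (∀ v, B v ⊆ S) ∧
      (∀ v, (B v).Nonempty) ∧
      (∀ v, (G.induce (B v)).Connected) ∧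
      (Pairwise fun u v => Disjoint (B u) (B v)) ∧
      ∀ ⦃u w⦄, H.Adj u w → ∃ a ∈ B u, ∃ b ∈ B w, G.Adj a b := by
  classical
  obtain ⟨B, hsub, hne, hconn, hdisj, hedge⟩ := h
  choose x hx using hne
  have key : ∀ u w : W, ∃ p : α × α, p.1 ∈ B u ∧ p.2 ∈ B w ∧ (H.Adj u w → G.Adj p.1 p.2) := by
    intro u w
    by_cases huw : H.Adj u w
    · obtain ⟨a, ha, b, hb, hab⟩ := hedge huw
      exact ⟨(a, b), ha, hb, fun _ => hab⟩
    · exact ⟨(x u, x w), hx u, hx w, fun h => absurd h huw⟩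
  choose p ha hb hab using key
  -- the finitely many points that must be kept in `B v`
  set T : W → Set α := fun v =>
    (Set.range fun w => (p v w).1) ∪ Set.range fun u => (p u v).2 with hT
  have hTfin : ∀ v, (T v).Finite := fun v =>
    (Set.finite_range _).union (Set.finite_range _)
  have hTsub : ∀ v, T v ⊆ B v := by
    rintro v y (⟨w, rfl⟩ | ⟨u, rfl⟩)
    · exact ha v w
    · exact hb u v
  have step : ∀ v : W, ∃ t : Set (B v), t.Finite ∧ (Subtype.val ⁻¹' T v) ⊆ t ∧
      (⟨x v, hx v⟩ : B v) ∈ t ∧ ((G.induce (B v)).induce t).Connected := by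
    intro v
    obtain ⟨t, h1, h2, h3, h4⟩ := exists_finite_connected_superset (hconn v)
      (Subtype.val ⁻¹' T v) ((hTfin v).preimage (Set.injOn_of_injective Subtype.val_injective))
      ⟨x v, hx v⟩
    exact ⟨t, h1, h2, h3, h4⟩
  choose t htfin htsub htx htconn using step
  refine ⟨fun v => Subtype.val '' t v, fun v => (htfin v).image _,
    fun v => (Subtype.coe_image_subset _ _).trans (hsub v),
    fun v => ⟨x v, ⟨⟨x v, hx v⟩, htx v, rfl⟩⟩,
    fun v => ((induceInduceIso G (B v) (t v)).connected_iff).mp (htconn v),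
    fun u v huv => ((hdisj huv).mono (Subtype.coe_image_subset _ _)
      (Subtype.coe_image_subset _ _)), ?_⟩
  intro u w huw
  refine ⟨(p u w).1, ?_, (p u w).2, ?_, hab u w huw⟩
  · exact ⟨⟨(p u w).1, ha u w⟩, htsub u (Set.mem_union_left _ ⟨w, rfl⟩), rfl⟩
  · exact ⟨⟨(p u w).2, hb u w⟩, htsub w (Set.mem_union_right _ ⟨u, rfl⟩), rfl⟩

/-- If `H` (finite) has a model avoiding every finite set, then `ω·H` is a minor of `G`. -/
lemma omega_minor_of_unbounded {W α : Type*} [Fintype W] {H : SimpleGraph W}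
    {G : SimpleGraph α} (h : ∀ S : Set α, S.Finite → ModelIn H G Sᶜ) :
    IsMinor (omegaCopies H) G := by
  classical
  have key : ∀ S : Set α, S.Finite → ∃ B : W → Set α,
      (∀ v, (B v).Finite) ∧ (∀ v, B v ⊆ Sᶜ) ∧ (∀ v, (B v).Nonempty) ∧
      (∀ v, (G.induce (B v)).Connected) ∧ (Pairwise fun u v => Disjoint (B u) (B v)) ∧
      ∀ ⦃u w⦄, H.Adj u w → ∃ a ∈ B u, ∃ b ∈ B w, G.Adj a b :=
    fun S hS => (h S hS).finite
  choose pick hfin hsub hne hconn hdisj hedge using key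
  let acc : ℕ → {S : Set α // S.Finite} := fun n =>
    Nat.rec ⟨∅, Set.finite_empty⟩
      (fun _ q => ⟨q.1 ∪ ⋃ v, pick q.1 q.2 v,
        q.2.union (Set.finite_iUnion fun v => hfin q.1 q.2 v)⟩) n
  let M : ℕ → W → Set α := fun n => pick (acc n).1 (acc n).2
  have hacc_succ : ∀ n, (acc (n + 1)).1 = (acc n).1 ∪ ⋃ v, M n v := fun n => rfl
  have hM_sub_next : ∀ n v, M n v ⊆ (acc (n + 1)).1 := fun n v x hx =>
    Set.mem_union_right _ (Set.mem_iUnion_of_mem v hx)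
  have hacc_mono : ∀ ⦃n m⦄, n ≤ m → (acc n).1 ⊆ (acc m).1 := by
    intro n m hnm
    induction hnm with
    | refl => exact subset_rfl
    | step h ih => exact ih.trans (by rw [hacc_succ]; exact Set.subset_union_left)
  have hM_avoid : ∀ n v, M n v ⊆ ((acc n).1)ᶜ := fun n v => hsub (acc n).1 (acc n).2 v
  refine ⟨fun q => M q.1 q.2, fun q => hne _ _ q.2, fun q => hconn _ _ q.2, ?_, ?_⟩
  · -- pairwise disjointness
    have main : ∀ (n m : ℕ) (v w : W), n < m → Disjoint (M n v) (M m w) := by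
      intro n m v w hnm
      have h1 : M n v ⊆ (acc m).1 := (hM_sub_next n v).trans (hacc_mono hnm)
      exact Set.disjoint_left.mpr fun x hx1 hx2 => (hM_avoid m w hx2) (h1 hx1)
    rintro ⟨n, v⟩ ⟨m, w⟩ hvw
    rcases lt_trichotomy n m with hlt | rfl | hlt
    · exact main n m v w hlt
    · have : v ≠ w := fun hv => hvw (by rw [hv])
      exact hdisj (acc n).1 (acc n).2 this
    · exact (main m n w v hlt).symm
  · rintro ⟨n, u⟩ ⟨m, w⟩ hadj
    rw [omegaCopies, SimpleGraph.fromRel_adj] at hadj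
    obtain ⟨hne', h'⟩ := hadj
    have hnm : n = m := by rcases h' with ⟨h1, _⟩ | ⟨h1, _⟩ <;> simp_all
    subst hnm
    have huw : H.Adj u w := by rcases h' with ⟨_, h2⟩ | ⟨_, h2⟩; exact h2; exact h2.symm
    exact hedge (acc n).1 (acc n).2 huw

/-- For a minor-closed class `P = Forb(H₁,…,H_k)` of countable graphs, where the
`Hᵢ` are finite graphs: a countable graph `G` satisfies `G − F ∈ P` for some
finite vertex set `F` iff `G` has none of `ω·H₁, …, ω·H_k` as a minor. -/
theorem forb_finite_vertex_removal {α : Type} [Countable α]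
    {ι : Type} [Fintype ι] {W : ι → Type} [∀ i, Fintype (W i)]
    (H : ∀ i, SimpleGraph (W i)) (G : SimpleGraph α) :
    (∃ F : Set α, F.Finite ∧ ∀ i, ¬ IsMinor (H i) (G.induce Fᶜ)) ↔
      ∀ i, ¬ IsMinor (omegaCopies (H i)) G := by
  classical
  constructor
  · rintro ⟨F, hF, hmin⟩ i ⟨B, hne, hconn, hdisj, hedge⟩
    -- pairs whose branch set meets F
    set P : Set (ℕ × W i) := {q | (B q ∩ F).Nonempty} with hP
    have hPfin : P.Finite := by
      have hinj : ∀ q : P, ∃ x : α, x ∈ B q.1 ∧ x ∈ F := fun q => q.2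
      choose f hf1 hf2 using hinj
      have : Function.Injective f := by
        intro q q' hqq'
        by_contra hne'
        have : Disjoint (B q.1) (B q'.1) := hdisj (fun h => hne' (Subtype.ext h))
        exact Set.disjoint_left.mp this (hf1 q) (hqq' ▸ hf1 q')
      have hFc : Finite F := hF
      have : Finite P := Finite.of_injective (fun q => (⟨f q, hf2 q⟩ : F))
        fun a b hab => this (congrArg Subtype.val hab)
      exact Set.toFinite P
    have hNfin : (Prod.fst '' P).Finite := hPfin.image _
    obtain ⟨n, hn⟩ := hNfin.infinite_compl.nonempty
    refine hmin i ((isMinor_induce_iff (H i) G Fᶜ).mpr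
      ⟨fun v => B (n, v), fun v x hx => ?_, fun v => hne _, fun v => hconn _,
        fun u v huv => hdisj (fun h => huv (by injection h)), fun u w huw => ?_⟩)
    · intro hxF
      exact hn ⟨(n, v), ⟨x, hx, hxF⟩, rfl⟩
    · refine hedge ?_
      rw [omegaCopies, SimpleGraph.fromRel_adj]
      exact ⟨fun h => huw.ne (by injection h), Or.inl ⟨rfl, huw⟩⟩
  · intro hω
    have key : ∀ i, ∃ F : Set α, F.Finite ∧ ¬ IsMinor (H i) (G.induce Fᶜ) := by
      intro i
      by_contra hcon
      push_neg at hcon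
      exact hω i (omega_minor_of_unbounded fun S hS =>
        (isMinor_induce_iff (H i) G Sᶜ).mp (hcon S hS))
    choose F hFfin hFmin using key
    refine ⟨⋃ i, F i, Set.finite_iUnion hFfin, fun i hmin => hFmin i ?_⟩
    rw [isMinor_induce_iff] at hmin ⊢
    exact hmin.mono (Set.compl_subset_compl.mpr (Set.subset_iUnion F i))
end

section
/- Let G be a countable, 2-connected, locally finite graph and U ⊆ V(G) infinite. Then G has a ray containing an infinite subset of U. -/
/-- `G` is 2-connected: connected, with at least 3 vertices, and still connected
after deleting any single vertex. -/
def TwoConnected {α : Type*} (G : SimpleGraph α) : Prop :=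
  G.Connected ∧ (∃ a b c : α, a ≠ b ∧ a ≠ c ∧ b ≠ c) ∧
    ∀ v : α, (G.induce {u | u ≠ v}).Connected

/-!
Fix `v₀`. Since `G` is locally finite, a König-type argument gives a geodesic ray `r` from `v₀`
such that every `r n` is joined to infinitely many vertices of `U` by walks ("teeth") staying at
distance at least `n` from `v₀`. If `r` meets `U` infinitely often we are done. Otherwise the ray
is the union of an increasing sequence of paths `v₀ … r m` that avoid all later vertices of `r`.
Such a path `W` is extended along `r` and then by a detour: a path between two vertices of `r`
beyond `W`, through a new vertex of `U`, avoiding `W` and meeting `r` only in its ends.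

Detours come from teeth. Let `F` be a finite set to be avoided. By Menger's theorem for two
paths (proved for finite graphs by induction on the number of edges, and reduced to that case
through a finite subgraph), the tip `u` of a tooth either lies on a path in `G - F` between two
vertices of `r` that meets `r` only in its ends, or a single vertex `c` on the tooth separates
`u` from `r` in `G - F`. In the second case 2-connectedness forces the component of `u` in
`G - F - c` to reach a neighbour of `F`. If this happened for all teeth, pigeonholing over the
finitely many neighbours of `F` would put infinitely many of the separators on one finite walk,
although they lie arbitrarily far from `v₀`.
-/

namespace SimpleGraph

variable {α : Type*} {G H : SimpleGraph α}

section Walks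

variable {a b c v : α}

theorem Walk.IsPath.append {p : G.Walk a b} {q : G.Walk b c} (hp : p.IsPath) (hq : q.IsPath)
    (h : ∀ x ∈ p.support, x ∈ q.support → x = b) : (p.append q).IsPath := by
  have hq' := q.cons_tail_support ▸ hq.support_nodup
  rw [Walk.isPath_def, Walk.support_append, List.nodup_append]
  refine ⟨hp.support_nodup, hq'.of_cons, fun x hx y hy hxy => ?_⟩
  subst hxy
  obtain rfl := h x hx (List.mem_of_mem_tail hy)
  exact (List.nodup_cons.mp hq').1 hy

theorem Walk.exists_prefix_first_mem (w : G.Walk a b) {T : Set α} (hb : b ∈ T) :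
    ∃ d ∈ T, ∃ q : G.Walk a d, q.support ⊆ w.support ∧ ∀ v ∈ q.support, v ∈ T → v = d := by
  induction w with
  | nil => exact ⟨_, hb, .nil, List.Subset.refl _, by simp⟩
  | @cons u _ _ h p ih =>
    by_cases hu : u ∈ T
    · exact ⟨u, hu, .nil, by simp, by simp⟩
    obtain ⟨d, hd, q, hsub, hfirst⟩ := ih hb
    refine ⟨d, hd, .cons h q, by simpa using List.cons_subset_cons _ hsub, ?_⟩
    simp only [Walk.support_cons, List.mem_cons, forall_eq_or_imp]
    exact ⟨fun h => (hu h).elim, hfirst⟩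

theorem Walk.exists_isPath_first_mem (w : G.Walk a b) {T : Set α} (hb : b ∈ T) :
    ∃ d ∈ T, ∃ q : G.Walk a d, q.IsPath ∧ q.support ⊆ w.support ∧
      ∀ v ∈ q.support, v ∈ T → v = d := by
  classical
  obtain ⟨d, hd, q, hsub, hfirst⟩ := w.exists_prefix_first_mem hb
  exact ⟨d, hd, q.bypass, q.bypass_isPath, fun x hx => hsub (q.support_bypass_subset_support hx),
    fun v hv => hfirst v (q.support_bypass_subset_support hv)⟩

theorem Walk.IsPath.exists_prefix_notMem {p : G.Walk a b} (hp : p.IsPath) (hv : v ∈ p.support)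
    (hcv : c ≠ v) (hc : c ∈ p.support → c = b) :
    ∃ q : G.Walk a v, q.support ⊆ p.support ∧ c ∉ q.support := by
  classical
  refine ⟨p.takeUntil v hv, p.support_takeUntil_subset_support hv, fun h => ?_⟩
  obtain rfl := hc (p.support_takeUntil_subset_support hv h)
  exact Walk.endpoint_notMem_support_takeUntil hp hv hcv h

end Walks

section Menger

variable {S T : Set α} {a b c x y : α}

def Separates (G : SimpleGraph α) (S T : Set α) (c : α) : Prop :=
  ∀ ⦃a b⦄ (w : G.Walk a b), a ∈ S → b ∈ T → c ∈ w.support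

def HasTwoDisjointWalks (G : SimpleGraph α) (S T : Set α) : Prop :=
  ∃ a₁ ∈ S, ∃ b₁ ∈ T, ∃ a₂ ∈ S, ∃ b₂ ∈ T, ∃ (p : G.Walk a₁ b₁) (q : G.Walk a₂ b₂),
    p.support.Disjoint q.support

theorem not_separates_iff :
    ¬G.Separates S T c ↔ ∃ a ∈ S, ∃ b ∈ T, ∃ w : G.Walk a b, c ∉ w.support := by
  simp [Separates]

/-- A path into the separator `c` and a path out of it can only cross at `c`. -/
theorem Separates.eq_of_mem_of_mem (hsep : G.Separates S T c) {s e e' t v : α}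
    {p : G.Walk s e} {q : G.Walk e' t} (hs : s ∈ S) (ht : t ∈ T) (hp : p.IsPath) (hq : q.IsPath)
    (hpc : c ∈ p.support → c = e) (hqc : c ∈ q.support → c = e')
    (hvp : v ∈ p.support) (hvq : v ∈ q.support) : v = c := by
  by_contra hvc
  obtain ⟨p', hp'sub, hcp'⟩ := hp.exists_prefix_notMem hvp (Ne.symm hvc) hpc
  obtain ⟨q', hq'sub, hcq'⟩ := hq.reverse.exists_prefix_notMem (by simpa using hvq)
    (Ne.symm hvc) (fun h => hqc (by simpa using h))
  have := hsep (p'.append q'.reverse) hs ht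
  rw [Walk.mem_support_append_iff, Walk.support_reverse, List.mem_reverse] at this
  exact this.elim hcp' hcq'

theorem HasTwoDisjointWalks.symm (h : G.HasTwoDisjointWalks S T) : G.HasTwoDisjointWalks T S := by
  obtain ⟨a₁, ha₁, b₁, hb₁, a₂, ha₂, b₂, hb₂, p, q, hpq⟩ := h
  exact ⟨b₁, hb₁, a₁, ha₁, b₂, hb₂, a₂, ha₂, p.reverse, q.reverse, by simpa using hpq⟩

theorem HasTwoDisjointWalks.mono (hle : G ≤ H) (h : G.HasTwoDisjointWalks S T) :
    H.HasTwoDisjointWalks S T := by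
  obtain ⟨a₁, ha₁, b₁, hb₁, a₂, ha₂, b₂, hb₂, p, q, hpq⟩ := h
  exact ⟨a₁, ha₁, b₁, hb₁, a₂, ha₂, b₂, hb₂, p.mapLe hle, q.mapLe hle, by simpa using hpq⟩

theorem HasTwoDisjointWalks.exists_isPath_to_pair (h : G.HasTwoDisjointWalks S {x, y}) :
    ∃ s ∈ S, ∃ s' ∈ S, ∃ (p : G.Walk s x) (q : G.Walk s' y),
      p.IsPath ∧ q.IsPath ∧ p.support.Disjoint q.support := by
  classical
  obtain ⟨a₁, ha₁, b₁, hb₁, a₂, ha₂, b₂, hb₂, p, q, hpq⟩ := h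
  have hb : b₁ ≠ b₂ := fun h => hpq p.end_mem_support (h ▸ q.end_mem_support)
  have hdisj : p.bypass.support.Disjoint q.bypass.support := fun v hp hq =>
    hpq (p.support_bypass_subset_support hp) (q.support_bypass_subset_support hq)
  simp only [Set.mem_insert_iff, Set.mem_singleton_iff] at hb₁ hb₂
  rcases hb₁ with rfl | rfl <;> rcases hb₂ with rfl | rfl
  · exact (hb rfl).elim
  · exact ⟨a₁, ha₁, a₂, ha₂, p.bypass, q.bypass, p.bypass_isPath, q.bypass_isPath, hdisj⟩
  · exact ⟨a₂, ha₂, a₁, ha₁, q.bypass, p.bypass, q.bypass_isPath, p.bypass_isPath, hdisj.symm⟩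
  · exact (hb rfl).elim

theorem Separates.exists_walk_to_pair (hsep : (G.deleteEdges {s(x, y)}).Separates S T c)
    (hy : y ∈ T) (w : G.Walk a b) (ha : a ∈ S) (hb : b ∈ T) :
    ∃ d ∈ ({c, x} : Set α), ∃ q : (G.deleteEdges {s(x, y)}).Walk a d, q.support ⊆ w.support := by
  classical
  by_cases hw : s(x, y) ∈ w.edges
  · have hxy : x ≠ y := (w.edges_subset_edgeSet hw).ne
    obtain ⟨d, hd, q, hsub, hfirst⟩ :=
      (w.takeUntil x (w.fst_mem_support_of_mem_edges hw)).exists_prefix_first_mem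
        (T := {x, y}) (by simp)
    have hq : s(x, y) ∉ q.edges := fun he => hxy <|
      (hfirst x (q.fst_mem_support_of_mem_edges he) (by simp)).trans
        (hfirst y (q.snd_mem_support_of_mem_edges he) (by simp)).symm
    have hsub' : (q.toDeleteEdge _ hq).support ⊆ w.support := fun v hv =>
      w.support_takeUntil_subset_support _ (hsub (by simpa using hv))
    simp only [Set.mem_insert_iff, Set.mem_singleton_iff] at hd
    rcases hd with rfl | rfl
    · exact ⟨d, by simp, _, hsub'⟩
    · have hc := hsep (q.toDeleteEdge _ hq) ha hy
      exact ⟨c, by simp, _, fun v hv => hsub' (Walk.support_takeUntil_subset_support _ hc hv)⟩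
  · have hc := hsep (w.toDeleteEdge _ hw) ha hb
    exact ⟨c, by simp, _, fun v hv => by
      simpa using Walk.support_takeUntil_subset_support _ hc hv⟩

theorem Separates.exists_walk_from_pair (hsep : (G.deleteEdges {s(x, y)}).Separates S T c)
    (hy : y ∈ T) (w : G.Walk a b) (ha : a ∈ S) (hb : b ∈ T) :
    ∃ d ∈ ({c, y} : Set α), ∃ t ∈ T, ∃ q : (G.deleteEdges {s(x, y)}).Walk d t,
      q.support ⊆ w.support := by
  classical
  by_cases hyw : y ∈ w.support
  · exact ⟨y, by simp, y, hy, .nil, by simpa using hyw⟩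
  have hw : s(x, y) ∉ w.edges := fun he => hyw (w.snd_mem_support_of_mem_edges he)
  have hc := hsep (w.toDeleteEdge _ hw) ha hb
  exact ⟨c, by simp, b, hb, _, fun v hv => by
    simpa using Walk.support_dropUntil_subset_support _ hc hv⟩

theorem Separates.not_separates_deleteEdge (hsep : (G.deleteEdges {s(x, y)}).Separates S T c)
    (hy : y ∈ T) {c' : α} (h : ¬G.Separates S T c') :
    ¬(G.deleteEdges {s(x, y)}).Separates S {c, x} c' ∧
      ¬(G.deleteEdges {s(x, y)}).Separates {c, y} T c' := by
  refine ⟨fun hsep' => h fun a b w ha hb => ?_, fun hsep' => h fun a b w ha hb => ?_⟩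
  · obtain ⟨d, hd, q, hsub⟩ := hsep.exists_walk_to_pair hy w ha hb
    exact hsub (hsep' q ha hd)
  · obtain ⟨d, hd, t, ht, q, hsub⟩ := hsep.exists_walk_from_pair hy w ha hb
    exact hsub (hsep' q hd ht)

theorem HasTwoDisjointWalks.of_separates {G' : SimpleGraph α} (hle : G' ≤ G) (hxy : G.Adj x y)
    (hsep : G'.Separates S T c) (h₁ : G'.HasTwoDisjointWalks S {c, x})
    (h₂ : G'.HasTwoDisjointWalks {c, y} T) : G.HasTwoDisjointWalks S T := by
  obtain ⟨s₁, hs₁, s₂, hs₂, p₁, p₂, hp₁, hp₂, hp⟩ := h₁.exists_isPath_to_pair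
  obtain ⟨t₁, ht₁, t₂, ht₂, q₁, q₂, hq₁, hq₂, hq⟩ := h₂.symm.exists_isPath_to_pair
  have hcp₂ : c ∉ p₂.support := fun h => hp p₁.end_mem_support h
  have hcq₂ : c ∉ q₂.support := fun h => hq q₁.end_mem_support h
  have h12 : p₁.support.Disjoint q₂.support := fun v hv hv' =>
    hcq₂ (hsep.eq_of_mem_of_mem hs₁ ht₂ hp₁ hq₂.reverse (fun _ => rfl)
      (fun h => absurd (by simpa using h) hcq₂) hv (by simpa using hv') ▸ hv')
  have h21 : p₂.support.Disjoint q₁.support := fun v hv hv' =>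
    hcp₂ (hsep.eq_of_mem_of_mem hs₂ ht₁ hp₂ hq₁.reverse (fun h => absurd h hcp₂)
      (fun _ => rfl) hv (by simpa using hv') ▸ hv)
  have h22 : p₂.support.Disjoint q₂.support := fun v hv hv' =>
    hcp₂ (hsep.eq_of_mem_of_mem hs₂ ht₂ hp₂ hq₂.reverse (fun h => absurd h hcp₂)
      (fun h => absurd (by simpa using h) hcq₂) hv (by simpa using hv') ▸ hv)
  refine ⟨s₁, hs₁, t₁, ht₁, s₂, hs₂, t₂, ht₂, ((p₁.append q₁.reverse).mapLe hle),
    (p₂.mapLe hle).append (.cons hxy (q₂.reverse.mapLe hle)), fun v hv hv' => ?_⟩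
  simp only [Walk.support_mapLe_eq_support, Walk.mem_support_append_iff, Walk.support_cons,
    Walk.support_reverse, List.mem_cons, List.mem_reverse] at hv hv'
  obtain hv' | rfl | hv' := hv'
  · exact hv.elim (hp · hv') (h21 hv' ·)
  · exact hv.elim (hp · p₂.end_mem_support) (h21 p₂.end_mem_support ·)
  · exact hv.elim (h12 · hv') (hq · hv')

theorem hasTwoDisjointWalks_of_finite [Nonempty α] (hfin : G.edgeSet.Finite)
    (h : ∀ c, ¬G.Separates S T c) : G.HasTwoDisjointWalks S T := by
  induction hn : G.edgeSet.ncard using Nat.strong_induction_on generalizing G S T with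
  | _ n ih =>
  have hwalk := fun c => not_separates_iff.mp (h c)
  by_cases hST : (S ∩ T).Nonempty
  · obtain ⟨s, hsS, hsT⟩ := hST
    obtain ⟨a, ha, b, hb, w, hs⟩ := hwalk s
    exact ⟨a, ha, b, hb, s, hsS, s, hsT, w, .nil, by simpa using hs⟩
  obtain ⟨a, ha, b, hb, w, -⟩ := hwalk (Classical.arbitrary α)
  have hw : ¬w.Nil := fun hw => hST ⟨a, ha, hw.eq ▸ hb⟩
  -- Delete the last edge `x b` of an `S`-`T` walk. If some `c` then separates `S` from `T`,
  -- link `S` to `{c, x}` and `{c, b}` to `T` by induction, and join the linkages at `c` and `x b`.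
  set G' := G.deleteEdges {s(w.penultimate, b)}
  have hlt : G'.edgeSet.ncard < n := by
    rw [edgeSet_deleteEdges, ← hn]
    exact Set.ncard_sdiff_singleton_lt_of_mem (w.adj_penultimate hw) hfin
  have hfin' : G'.edgeSet.Finite := hfin.subset (edgeSet_mono (deleteEdges_le _))
  by_cases hsep : ∃ c, G'.Separates S T c
  · obtain ⟨c, hc⟩ := hsep
    have hne := fun c' => hc.not_separates_deleteEdge hb (h c')
    exact .of_separates (deleteEdges_le _) (w.adj_penultimate hw) hc
      (ih _ hlt hfin' (fun c' => (hne c').1) rfl) (ih _ hlt hfin' (fun c' => (hne c').2) rfl)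
  · push Not at hsep
    exact (ih _ hlt hfin' hsep rfl).mono (deleteEdges_le _)

theorem hasTwoDisjointWalks_of_forall_not_separates [Nonempty α]
    (h : ∀ c, ¬G.Separates S T c) : G.HasTwoDisjointWalks S T := by
  choose a ha b hb w hw using fun c => not_separates_iff.mp (h c)
  set c₀ := Classical.arbitrary α
  -- the walk `w c₀` avoids every vertex off it, so finitely many walks witness that no vertex
  -- separates `S` from `T`
  set K : Set α := insert c₀ {c | c ∈ (w c₀).support}
  set G₀ := fromEdgeSet (⋃ c ∈ K, {e | e ∈ (w c).edges})
  have hG₀ : ∀ c ∈ K, ∀ e ∈ (w c).edges, e ∈ G₀.edgeSet := fun c hc e he => by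
    rw [edgeSet_fromEdgeSet]
    exact ⟨Set.mem_biUnion hc he, G.not_isDiag_of_mem_edgeSet ((w c).edges_subset_edgeSet he)⟩
  have hfin : G₀.edgeSet.Finite := by
    rw [edgeSet_fromEdgeSet]
    exact (((w c₀).support.finite_toSet.insert c₀).biUnion fun c _ =>
      (w c).edges.finite_toSet).sdiff
  have hle : G₀ ≤ G := by
    rw [fromEdgeSet_le]
    rintro e ⟨he, -⟩
    obtain ⟨c, -, he⟩ := Set.mem_iUnion₂.mp he
    exact (w c).edges_subset_edgeSet he
  refine (hasTwoDisjointWalks_of_finite hfin fun c hsep => ?_).mono hle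
  by_cases hc : c ∈ (w c₀).support
  · exact hw c (by simpa using hsep ((w c).transfer G₀ (hG₀ c (.inr hc))) (ha c) (hb c))
  · exact hc (by simpa using hsep ((w c₀).transfer G₀ (hG₀ c₀ (.inl rfl))) (ha c₀) (hb c₀))

end Menger

/-- `G - X`, keeping the vertices of `X` as isolated vertices. -/
def deleteVerts (G : SimpleGraph α) (X : Set α) : SimpleGraph α where
  Adj a b := G.Adj a b ∧ a ∉ X ∧ b ∉ X
  symm := ⟨fun _ _ h => ⟨h.1.symm, h.2.2, h.2.1⟩⟩

section DeleteVerts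

variable {X Y : Set α} {a b u v : α}

theorem deleteVerts_le : G.deleteVerts X ≤ G := fun _ _ h => h.1

theorem deleteVerts_anti (h : X ⊆ Y) : G.deleteVerts Y ≤ G.deleteVerts X :=
  fun _ _ hab => ⟨hab.1, fun ha => hab.2.1 (h ha), fun hb => hab.2.2 (h hb)⟩

theorem Walk.notMem_of_mem_support_deleteVerts (w : (G.deleteVerts X).Walk a b) (ha : a ∉ X)
    {z : α} (hz : z ∈ w.support) : z ∉ X := by
  induction w with
  | nil => simpa [show z = _ by simpa using hz] using ha
  | cons h p ih =>
    rcases List.mem_cons.mp (Walk.support_cons _ _ ▸ hz) with rfl | hz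
    exacts [ha, ih h.2.2 hz]

theorem Walk.exists_deleteVerts_support_eq (w : G.Walk a b) (hw : ∀ z ∈ w.support, z ∉ X) :
    ∃ w' : (G.deleteVerts X).Walk a b, w'.support = w.support := by
  induction w with
  | nil => exact ⟨.nil, rfl⟩
  | cons h p ih =>
    simp only [Walk.support_cons, List.mem_cons, forall_eq_or_imp] at hw
    obtain ⟨p', hp'⟩ := ih hw.2
    have h' : (G.deleteVerts X).Adj _ _ := ⟨h, hw.1, hw.2 _ p.start_mem_support⟩
    exact ⟨.cons h' p', by rw [Walk.support_cons, Walk.support_cons, hp']⟩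

theorem Walk.exists_tail_deleteVerts (w : G.Walk u a) (hua : u ≠ a) :
    ∃ n ∈ G.neighborSet u, ∃ w' : (G.deleteVerts {u}).Walk n a, w'.support ⊆ w.support := by
  classical
  obtain ⟨n, h, p, hp⟩ := Walk.exists_eq_cons_of_ne hua w.bypass
  have hpath := hp ▸ w.bypass_isPath
  rw [Walk.cons_isPath_iff] at hpath
  obtain ⟨p', hp'⟩ := p.exists_deleteVerts_support_eq (X := {u}) fun z hz hzu => hpath.2 (hzu ▸ hz)
  refine ⟨n, h, p', fun z hz => w.support_bypass_subset_support ?_⟩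
  rw [hp, Walk.support_cons]
  exact List.mem_cons_of_mem _ (hp' ▸ hz)

theorem Connected.reachable_deleteVerts_singleton (h : (G.induce {u | u ≠ v}).Connected)
    (ha : a ≠ v) (hb : b ≠ v) : (G.deleteVerts {v}).Reachable a b :=
  (h.preconnected ⟨a, ha⟩ ⟨b, hb⟩).map
    (⟨Subtype.val, fun {x y} hxy => ⟨hxy, x.2, y.2⟩⟩ : G.induce {u | u ≠ v} →g G.deleteVerts {v})

end DeleteVerts

section Separators

variable {A F : Set α}

theorem Separates.of_deleteVerts_neighborSet {u c : α}
    (hc : (G.deleteVerts {u}).Separates (G.neighborSet u) A c) (huA : u ∉ A)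
    (hreach : ∃ a ∈ A, G.Reachable u a) : c ≠ u ∧ G.Separates {u} A c := by
  have hne : ∀ a ∈ A, u ≠ a := fun a ha h => huA (h ▸ ha)
  refine ⟨?_, ?_⟩
  · rintro rfl
    obtain ⟨a, ha, ⟨w⟩⟩ := hreach
    obtain ⟨n, hn, w', -⟩ := w.exists_tail_deleteVerts (hne a ha)
    exact w'.notMem_of_mem_support_deleteVerts (G.ne_of_adj hn).symm (hc w' hn ha) rfl
  · rintro s a w rfl ha
    obtain ⟨n, hn, w', hsub⟩ := w.exists_tail_deleteVerts (hne a ha)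
    exact hsub (hc w' hn ha)

theorem exists_isPath_through_or_separates {u : α} (huA : u ∉ A)
    (hreach : ∃ a ∈ A, G.Reachable u a) :
    (∃ a ∈ A, ∃ b ∈ A, a ≠ b ∧ ∃ J : G.Walk a b, J.IsPath ∧ u ∈ J.support ∧
      ∀ z ∈ J.support, z ∈ A → z = a ∨ z = b) ∨ ∃ c ≠ u, G.Separates {u} A c := by
  have : Nonempty α := ⟨u⟩
  by_cases hsep : ∃ c, (G.deleteVerts {u}).Separates (G.neighborSet u) A c
  · obtain ⟨c, hc⟩ := hsep
    exact .inr ⟨c, hc.of_deleteVerts_neighborSet huA hreach⟩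
  push Not at hsep
  obtain ⟨n₁, hn₁ : G.Adj u n₁, a₁, ha₁, n₂, hn₂ : G.Adj u n₂, a₂, ha₂, p, q, hpq⟩ :=
    hasTwoDisjointWalks_of_forall_not_separates hsep
  obtain ⟨a, ha, p', hp', hp'sub, hp'A⟩ := p.exists_isPath_first_mem ha₁
  obtain ⟨b, hb, q', hq', hq'sub, hq'A⟩ := q.exists_isPath_first_mem ha₂
  have hup' : u ∉ p'.support := fun h =>
    p'.notMem_of_mem_support_deleteVerts (G.ne_of_adj hn₁).symm h rfl
  have huq' : u ∉ q'.support := fun h =>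
    q'.notMem_of_mem_support_deleteVerts (G.ne_of_adj hn₂).symm h rfl
  have hdisj : ∀ z ∈ p'.support, z ∉ q'.support := fun z h h' => hpq (hp'sub h) (hq'sub h')
  have hP : (Walk.cons hn₁ (p'.mapLe deleteVerts_le)).IsPath :=
    Walk.cons_isPath_iff _ _ |>.mpr ⟨hp'.mapLe _, by simpa using hup'⟩
  have hQ : (Walk.cons hn₂ (q'.mapLe deleteVerts_le)).IsPath :=
    Walk.cons_isPath_iff _ _ |>.mpr ⟨hq'.mapLe _, by simpa using huq'⟩
  refine .inl ⟨a, ha, b, hb, fun hab => hdisj a p'.end_mem_support (hab ▸ q'.end_mem_support),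
    _, hP.reverse.append hQ fun z hz hz' => ?_, by simp, fun z hz hzA => ?_⟩
  · simp only [Walk.support_reverse, List.mem_reverse, Walk.support_cons,
      Walk.support_mapLe_eq_support, List.mem_cons] at hz hz'
    obtain rfl | hz := hz
    · rfl
    · exact hz'.resolve_right (hdisj z hz)
  · simp only [Walk.mem_support_append_iff, Walk.support_reverse, List.mem_reverse,
      Walk.support_cons, Walk.support_mapLe_eq_support, List.mem_cons] at hz
    obtain (rfl | hz) | rfl | hz := hz
    exacts [(huA hzA).elim, .inl (hp'A z hz hzA), (huA hzA).elim, .inr (hq'A z hz hzA)]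

theorem Separates.mem_support_of_reachable {u c x a : α}
    (hsep : (G.deleteVerts F).Separates {u} A c) (hu : u ∉ insert c F)
    (hx : (G.deleteVerts (insert c F)).Reachable u x) (ha : a ∈ A)
    (W : (G.deleteVerts F).Walk x a) : c ∈ W.support := by
  obtain ⟨w⟩ := hx
  have := hsep ((w.mapLe (deleteVerts_anti (Set.subset_insert _ _))).append W) rfl ha
  rw [Walk.mem_support_append_iff, Walk.support_mapLe_eq_support] at this
  exact this.resolve_left fun h => w.notMem_of_mem_support_deleteVerts hu h (Set.mem_insert _ _)

/-- A walk from `u` to `A` avoiding `c`, which exists by 2-connectedness, must leave the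
component of `u` in `G - F - c`, and it can only do so into `F`. -/
theorem Separates.exists_reachable_mem_neighborSet {u c a : α}
    (h2 : (G.induce {v | v ≠ c}).Connected) (hsep : (G.deleteVerts F).Separates {u} A c)
    (hu : u ∉ insert c F) (ha : a ∈ A) (hac : a ≠ c) :
    ∃ x, (G.deleteVerts (insert c F)).Reachable u x ∧ x ∈ ⋃ f ∈ F, G.neighborSet f := by
  obtain ⟨w⟩ := h2.reachable_deleteVerts_singleton (fun h => hu (.inl h)) hac
  set P := {x | (G.deleteVerts (insert c F)).Reachable u x}
  have haP : a ∉ P := fun hP =>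
    hac (List.mem_singleton.mp (hsep.mem_support_of_reachable hu hP ha .nil)).symm
  obtain ⟨d, -, hdP, hdP'⟩ := w.exists_boundary_dart P Reachable.rfl haP
  obtain ⟨hadj, -, hsnd⟩ := d.adj
  have hsndF : d.snd ∈ F := by
    by_contra hF
    obtain ⟨w'⟩ := id hdP
    have hfst := w'.notMem_of_mem_support_deleteVerts hu w'.end_mem_support
    exact hdP' ⟨w'.concat (show (G.deleteVerts _).Adj _ _ from
      ⟨hadj, hfst, fun h => h.elim hsnd hF⟩)⟩
  exact ⟨d.fst, hdP, Set.mem_biUnion hsndF hadj.symm⟩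

theorem exists_finite_infinite_setOf_separator_mem {ι : Type*} [Infinite ι]
    (hlf : ∀ v, (G.neighborSet v).Finite) (h2 : ∀ v, (G.induce {u | u ≠ v}).Connected)
    (hF : F.Finite) (hA : ∀ c, ∃ a ∈ A, a ≠ c) {u c : ι → α} (hu : ∀ i, u i ∉ F)
    (hcu : ∀ i, c i ≠ u i) (hsep : ∀ i, (G.deleteVerts F).Separates {u i} A (c i))
    (hreach : ∀ i, ∃ a ∈ A, (G.deleteVerts F).Reachable (u i) a) :
    ∃ K : Set α, K.Finite ∧ {i | c i ∈ K}.Infinite := by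
  have hu' : ∀ i, u i ∉ insert (c i) F := fun i h => h.elim (hcu i).symm (hu i)
  choose x hxP hxN using fun i =>
    have ⟨a, ha, hac⟩ := hA (c i)
    (hsep i).exists_reachable_mem_neighborSet (h2 (c i)) (hu' i) ha hac
  obtain ⟨x₀, hx₀⟩ : ∃ x₀, {i | x i = x₀}.Infinite := by
    by_contra! hfin
    exact Set.infinite_univ (((hF.biUnion fun f _ => hlf f).biUnion fun y _ => hfin y).subset
      fun i _ => Set.mem_biUnion (hxN i) rfl)
  obtain ⟨i₀, rfl⟩ := hx₀.nonempty
  obtain ⟨a, ha, hra⟩ := hreach i₀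
  obtain ⟨W⟩ := ((hxP i₀).mono (deleteVerts_anti (Set.subset_insert _ _))).symm.trans hra
  exact ⟨{z | z ∈ W.support}, W.support.finite_toSet,
    hx₀.mono fun i hi => (hsep i).mem_support_of_reachable (hu' i) (hi ▸ hxP i) ha W⟩

end Separators

section Comb

variable {U : Set α} {v₀ : α} {r : ℕ → α}

theorem Connected.finite_setOf_dist_le (hconn : G.Connected) (hlf : ∀ v, (G.neighborSet v).Finite)
    (v : α) (n : ℕ) : {u | G.dist v u ≤ n}.Finite := by
  have hwalk : ∀ n, {u | ∃ p : G.Walk v u, p.length ≤ n}.Finite := by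
    intro n
    induction n with
    | zero =>
      refine (Set.finite_singleton v).subset fun u ⟨p, hp⟩ => ?_
      exact (p.eq_of_length_eq_zero (Nat.le_zero.mp hp)).symm
    | succ n ih =>
      refine (ih.union (ih.biUnion fun w _ => hlf w)).subset fun u ⟨p, hp⟩ => ?_
      by_cases hpn : p.length ≤ n
      · exact .inl ⟨p, hpn⟩
      have hp0 : ¬p.Nil := fun h => hpn (by simp [Walk.length_eq_zero_iff.mpr h])
      exact .inr (Set.mem_biUnion ⟨p.dropLast, by rw [Walk.length_dropLast]; omega⟩
        (p.adj_penultimate hp0))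
  refine (hwalk n).subset fun u hu => ?_
  obtain ⟨p, hp⟩ := (hconn.preconnected v u).exists_walk_length_eq_dist
  exact ⟨p, hp ▸ hu⟩

theorem Walk.dist_getVert_of_length_eq_dist (hconn : G.Connected) {v u : α} {p : G.Walk v u}
    (hp : p.length = G.dist v u) {k : ℕ} (hk : k ≤ p.length) : G.dist v (p.getVert k) = k := by
  refine le_antisymm ((dist_le (p.take k)).trans (by simp [Walk.take_length])) ?_
  have h₁ := dist_le (p.drop k)
  have h₂ : G.dist v u ≤ _ := hconn.dist_triangle (v := p.getVert k)
  rw [Walk.drop_length] at h₁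
  omega

structure IsGeodesicComb (G : SimpleGraph α) (U : Set α) (v₀ : α) (r : ℕ → α) : Prop where
  adj : ∀ n, G.Adj (r n) (r (n + 1))
  dist_eq : ∀ n, G.dist v₀ (r n) = n
  infinite_teeth :
    ∀ n, {u ∈ U | ∃ t : G.Walk (r n) u, ∀ z ∈ t.support, n ≤ G.dist v₀ z}.Infinite

theorem IsGeodesicComb.injective (hr : G.IsGeodesicComb U v₀ r) : Function.Injective r :=
  fun a b h => by simpa [hr.dist_eq] using congrArg (G.dist v₀) h

theorem Connected.exists_isGeodesicComb (hconn : G.Connected)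
    (hlf : ∀ v, (G.neighborSet v).Finite) (hU : U.Infinite) (v₀ : α) :
    ∃ r, G.IsGeodesicComb U v₀ r := by
  choose geo hgeo using fun u => (hconn.preconnected v₀ u).exists_walk_length_eq_dist
  -- `D n v`: the vertices of `U` beyond distance `n` whose chosen geodesic passes `v` at time `n`
  let D : ℕ → α → Set α := fun n v => {u ∈ U | n < G.dist v₀ u ∧ (geo u).getVert n = v}
  have hstep : ∀ n v, (D n v).Infinite → ∃ w, G.Adj v w ∧ (D (n + 1) w).Infinite := by
    intro n v hD
    by_contra! hfin
    refine (hD.sdiff (hconn.finite_setOf_dist_le hlf v₀ (n + 1))) <|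
      ((hlf v).biUnion fun w hw => hfin w hw).subset ?_
    rintro u ⟨⟨huU, -, hv⟩, hfar⟩
    have hlt : n + 1 < (geo u).length := by
      simp only [Set.mem_ofPred_eq] at hfar
      have := hgeo u
      omega
    exact Set.mem_biUnion (hv ▸ (geo u).adj_getVert_succ (by omega))
      ⟨huU, hgeo u ▸ hlt, rfl⟩
  choose! next hnext using hstep
  let r : ℕ → α := fun n => Nat.rec v₀ next n
  have hr : ∀ n, (D n (r n)).Infinite := by
    intro n
    induction n with
    | zero =>
      refine (hU.sdiff (Set.finite_singleton v₀)).mono ?_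
      rintro u ⟨huU, hu⟩
      exact ⟨huU, (hconn.preconnected v₀ u).pos_dist_of_ne (Ne.symm hu), by simp [r]⟩
    | succ n ih => exact (hnext n (r n) ih).2
  refine ⟨r, fun n => (hnext n (r n) (hr n)).1, fun n => ?_, fun n => (hr n).mono ?_⟩
  · obtain ⟨u, -, hlt, hv⟩ := (hr n).nonempty
    rw [← hv]
    exact Walk.dist_getVert_of_length_eq_dist hconn (hgeo u) (by rw [hgeo u]; omega)
  rintro u ⟨huU, hlt, hv⟩
  refine ⟨huU, ((geo u).drop n).copy hv rfl, fun z hz => ?_⟩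
  rw [Walk.support_copy, Walk.mem_support_iff_exists_getVert] at hz
  obtain ⟨k, rfl, hk⟩ := hz
  rw [Walk.drop_length, hgeo u] at hk
  rw [Walk.drop_getVert, Walk.dist_getVert_of_length_eq_dist hconn (hgeo u) (by rw [hgeo u]; omega)]
  omega

theorem IsGeodesicComb.exists_tooth (hr : G.IsGeodesicComb U v₀ r)
    (hUr : (U ∩ Set.range r).Finite) (n : ℕ) :
    ∃ u ∈ U, u ∉ Set.range r ∧ ∃ t : G.Walk (r n) u, ∀ z ∈ t.support, n ≤ G.dist v₀ z := by
  obtain ⟨u, ⟨huU, ht⟩, hur⟩ := ((hr.infinite_teeth n).sdiff hUr).nonempty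
  exact ⟨u, huU, fun h => hur ⟨huU, h⟩, ht⟩

theorem IsGeodesicComb.exists_isPath_through_tip (hr : G.IsGeodesicComb U v₀ r)
    (hlf : ∀ v, (G.neighborSet v).Finite) (h2 : ∀ v, (G.induce {u | u ≠ v}).Connected)
    (hUr : (U ∩ Set.range r).Finite) {F : Set α} (hF : F.Finite) :
    ∃ u ∈ U, ∃ a ∈ Set.range r \ F, ∃ b ∈ Set.range r \ F, a ≠ b ∧
      ∃ J : (G.deleteVerts F).Walk a b, J.IsPath ∧ u ∈ J.support ∧
        ∀ z ∈ J.support, z ∈ Set.range r \ F → z = a ∨ z = b := by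
  obtain ⟨m, hm⟩ := (hF.image (G.dist v₀)).bddAbove
  have hfar : ∀ z, m < G.dist v₀ z → z ∉ F := fun z hz hzF =>
    (hm (Set.mem_image_of_mem _ hzF)).not_gt hz
  set A := Set.range r \ F
  choose u huU hur t ht using fun i => hr.exists_tooth hUr (m + 1 + i)
  have htF : ∀ i, ∀ z ∈ (t i).support, z ∉ F := fun i z hz => hfar z (by have := ht i z hz; omega)
  have hrA : ∀ i, r (m + 1 + i) ∈ A := fun i => ⟨⟨_, rfl⟩, htF i _ (t i).start_mem_support⟩
  choose w hw using fun i => (t i).reverse.exists_deleteVerts_support_eq (by simpa using htF i)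
  by_contra hpath
  -- Otherwise every tooth carries a separator, and these lie arbitrarily far from `v₀`.
  have hsep : ∀ i, ∃ c ≠ u i, (G.deleteVerts F).Separates {u i} A c := fun i =>
    (exists_isPath_through_or_separates (A := A) (fun h => hur i h.1)
      ⟨_, hrA i, (w i).reachable⟩).resolve_left fun h => hpath ⟨u i, huU i, h⟩
  choose c hcu hc using hsep
  have hcdist : ∀ i, m + 1 + i ≤ G.dist v₀ (c i) := fun i =>
    ht i _ (by simpa [hw] using hc i (w i) rfl (hrA i))
  have hA : ∀ c, ∃ a ∈ A, a ≠ c := fun c => by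
    by_cases h : r (m + 1 + 0) = c
    · exact ⟨_, hrA 1, fun h' => by simpa using hr.injective (h'.trans h.symm)⟩
    · exact ⟨_, hrA 0, h⟩
  obtain ⟨K, hK, hcK⟩ := exists_finite_infinite_setOf_separator_mem hlf h2 hF hA
    (fun i => htF i _ (t i).end_mem_support) hcu hc fun i => ⟨_, hrA i, (w i).reachable⟩
  obtain ⟨D, hD⟩ := (hK.image (G.dist v₀)).bddAbove
  obtain ⟨i, hi, hiD⟩ := hcK.exists_gt D
  have := hD (Set.mem_image_of_mem _ hi)
  have := hcdist i
  omega

theorem IsGeodesicComb.exists_detour (hr : G.IsGeodesicComb U v₀ r)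
    (hlf : ∀ v, (G.neighborSet v).Finite) (h2 : ∀ v, (G.induce {u | u ≠ v}).Connected)
    (hUr : (U ∩ Set.range r).Finite) {F : Set α} (hF : F.Finite) :
    ∃ i j, i ≠ j ∧ ∃ J : G.Walk (r i) (r j), J.IsPath ∧ (∀ z ∈ J.support, z ∉ F) ∧
      (∀ k, r k ∈ J.support → k = i ∨ k = j) ∧ ∃ u ∈ U, u ∈ J.support := by
  obtain ⟨u, huU, _, ⟨⟨i, rfl⟩, hiF⟩, _, ⟨⟨j, rfl⟩, -⟩, hij, J, hJ, huJ, hJA⟩ :=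
    hr.exists_isPath_through_tip hlf h2 hUr hF
  have hJF : ∀ z ∈ J.support, z ∉ F := fun z => J.notMem_of_mem_support_deleteVerts hiF
  refine ⟨i, j, fun h => hij (h ▸ rfl), J.mapLe deleteVerts_le, hJ.mapLe _,
    by simpa using hJF, fun k hk => ?_, u, huU, by simpa using huJ⟩
  rw [Walk.support_mapLe_eq_support] at hk
  exact (hJA _ hk ⟨⟨k, rfl⟩, hJF _ hk⟩).imp (fun h => hr.injective h) (fun h => hr.injective h)

end Comb

section Ray

variable {U : Set α} {v : α}

theorem exists_isPath_of_adj_succ {r : ℕ → α} (hr : ∀ n, G.Adj (r n) (r (n + 1)))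
    (hinj : Function.Injective r) {m n : ℕ} (hmn : m ≤ n) :
    ∃ w : G.Walk (r m) (r n), w.IsPath ∧ ∀ z ∈ w.support, ∃ k, m ≤ k ∧ k ≤ n ∧ r k = z := by
  induction n, hmn using Nat.le_induction with
  | base => exact ⟨.nil, .nil, fun z hz => ⟨m, le_rfl, le_rfl, (List.mem_singleton.mp hz).symm⟩⟩
  | succ n hmn ih =>
    obtain ⟨w, hw, hsup⟩ := ih
    have hnot : r (n + 1) ∉ w.support := fun h => by
      obtain ⟨k, -, hk, hkeq⟩ := hsup _ h
      have := hinj hkeq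
      omega
    refine ⟨w.concat (hr n), hw.concat hnot (hr n), fun z hz => ?_⟩
    rw [Walk.support_concat, List.mem_append, List.mem_singleton] at hz
    obtain hz | rfl := hz
    · obtain ⟨k, hmk, hkn, rfl⟩ := hsup z hz
      exact ⟨k, hmk, by omega, rfl⟩
    · exact ⟨n + 1, by omega, le_rfl, rfl⟩

theorem exists_isRay_of_append {e : ℕ → α} (P : ∀ n, G.Walk v (e n))
    (hP : ∀ n, (P n).IsPath) (q : ∀ n, G.Walk (e n) (e (n + 1)))
    (hPq : ∀ n, P (n + 1) = (P n).append (q n)) (hq : ∀ n, ¬(q n).Nil) :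
    ∃ ρ : ℕ → α, IsRay G ρ ∧ ∀ n, ∀ z ∈ (P n).support, z ∈ Set.range ρ := by
  have hlen_succ : ∀ n, (P n).length < (P (n + 1)).length := fun n => by
    rw [hPq, Walk.length_append]
    have := Walk.not_nil_iff_lt_length.mp (hq n)
    omega
  have hlen : ∀ n, n ≤ (P n).length := fun n => by
    induction n with
    | zero => omega
    | succ n ih => exact ih.trans_lt (hlen_succ n)
  have hagree : ∀ n n', n ≤ n' → ∀ k ≤ (P n).length, (P n').getVert k = (P n).getVert k := by
    intro n n' hnn' k hk
    induction n', hnn' using Nat.le_induction with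
    | base => rfl
    | succ n' hnn' ih =>
      have hk' : k ≤ (P n').length :=
        hk.trans (monotone_nat_of_le_succ (fun n => (hlen_succ n).le) hnn')
      rw [hPq, Walk.getVert_append]
      split_ifs with hlt
      · exact ih
      · obtain rfl : k = (P n').length := by omega
        rw [Nat.sub_self, Walk.getVert_zero, ← ih, Walk.getVert_length]
  have hρ : ∀ n k, k ≤ n → (P n).getVert k = (P k).getVert k := fun n k hkn =>
    hagree k n hkn k (hlen k)
  refine ⟨fun k => (P k).getVert k, ⟨fun a b hab => ?_, fun n => ?_⟩, fun n z hz => ?_⟩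
  · dsimp only at hab
    rw [← hρ (max a b) a (le_max_left _ _), ← hρ (max a b) b (le_max_right _ _)] at hab
    exact (hP _).getVert_injOn ((le_max_left a b).trans (hlen _))
      ((le_max_right a b).trans (hlen _)) hab
  · dsimp only
    rw [← hρ (n + 1) n (by omega)]
    exact (P (n + 1)).adj_getVert_succ (by have := hlen (n + 1); omega)
  · obtain ⟨k, rfl, hk⟩ := Walk.mem_support_iff_exists_getVert.mp hz
    refine ⟨k, ?_⟩
    rcases le_total k n with hkn | hnk
    · exact (hρ n k hkn).symm
    · exact hagree n k hnk k hk

theorem exists_isRay_of_forall_extend (Good : ∀ {x}, G.Walk v x → Prop)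
    (hpath : ∀ {x} (W : G.Walk v x), Good W → W.IsPath) (h₀ : ∃ x, ∃ W : G.Walk v x, Good W)
    (hstep : ∀ {x} (W : G.Walk v x), Good W →
      ∃ y, ∃ q : G.Walk x y, Good (W.append q) ∧ ∃ u ∈ U, u ∈ q.support ∧ u ∉ W.support) :
    ∃ ρ : ℕ → α, IsRay G ρ ∧ (U ∩ Set.range ρ).Infinite := by
  let σ := {s : Σ x, G.Walk v x // Good s.2}
  choose y q hgood u huU huq huW using fun s : σ => hstep s.1.2 s.2
  obtain ⟨x₀, W₀, hW₀⟩ := h₀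
  let seq : ℕ → σ := fun n =>
    Nat.rec ⟨⟨x₀, W₀⟩, hW₀⟩ (fun _ s => ⟨⟨y s, s.1.2.append (q s)⟩, hgood s⟩) n
  have hq : ∀ s, ¬(q s).Nil := fun s hnil => huW s <| by
    simp [show u s = s.1.1 by simpa [Walk.nil_iff_support_eq.mp hnil] using huq s]
  obtain ⟨ρ, hρ, hρP⟩ := exists_isRay_of_append (e := fun n => (seq n).1.1) (fun n => (seq n).1.2)
    (fun n => hpath _ (seq n).2) (fun n => q (seq n)) (fun _ => rfl) (fun n => hq (seq n))
  have hmono : ∀ n n', n ≤ n' → (seq n).1.2.support ⊆ (seq n').1.2.support := by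
    intro n n' h
    induction n', h using Nat.le_induction with
    | base => exact List.Subset.refl _
    | succ n' _ ih => exact fun z hz => (Walk.mem_support_append_iff _ _).mpr (.inl (ih hz))
  have hnew : ∀ n, u (seq n) ∈ (seq (n + 1)).1.2.support := fun n =>
    (Walk.mem_support_append_iff _ _).mpr (.inr (huq _))
  refine ⟨ρ, hρ, (Set.infinite_range_of_injective (f := fun n => u (seq n))
    (Function.Injective.of_lt_imp_ne fun n n' hlt h => huW (seq n') ?_)).mono ?_⟩
  · exact h ▸ hmono (n + 1) n' hlt (hnew n)
  · rintro _ ⟨n, rfl⟩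
    exact ⟨huU _, hρP (n + 1) _ (hnew n)⟩

theorem IsGeodesicComb.exists_extension {v₀ : α} {r : ℕ → α} (hr : G.IsGeodesicComb U v₀ r)
    (hconn : G.Connected) (hlf : ∀ v, (G.neighborSet v).Finite)
    (h2 : ∀ v, (G.induce {u | u ≠ v}).Connected) (hUr : (U ∩ Set.range r).Finite) {m : ℕ}
    (W : G.Walk v₀ (r m)) (hW : W.IsPath) (hWr : ∀ k, m < k → r k ∉ W.support) :
    ∃ j, ∃ q : G.Walk (r m) (r j), (W.append q).IsPath ∧
      (∀ k, j < k → r k ∉ (W.append q).support) ∧ ∃ u ∈ U, u ∈ q.support ∧ u ∉ W.support := by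
  set F := {z | z ∈ W.support} ∪ {z | G.dist v₀ z ≤ m}
  obtain ⟨i, j, hij, J, hJ, hJF, hJr, u, huU, huJ⟩ := hr.exists_detour hlf h2 hUr
    (W.support.finite_toSet.union (hconn.finite_setOf_dist_le hlf v₀ m))
  wlog hlt : i < j generalizing i j
  · refine this j i hij.symm J.reverse hJ.reverse (by simpa using hJF)
      (fun k hk => (hJr k (by simpa using hk)).symm) (by simpa using huJ) (by omega)
  have hmi : m < i := by
    have := hJF _ J.start_mem_support
    simp only [Set.mem_union, Set.mem_ofPred_eq, hr.dist_eq, not_or] at this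
    omega
  obtain ⟨seg, hseg, hsegr⟩ := exists_isPath_of_adj_succ hr.adj hr.injective hmi.le
  refine ⟨j, seg.append J, hW.append (hseg.append hJ fun z hz hz' => ?_) fun z hz hz' => ?_,
    fun k hk hkW => ?_, u, huU, by simp [huJ], fun h => hJF u huJ (.inl h)⟩
  · obtain ⟨k, -, hki, rfl⟩ := hsegr z hz
    obtain rfl | rfl := hJr k hz'
    exacts [rfl, absurd hki (by omega)]
  · rw [Walk.mem_support_append_iff] at hz'
    obtain hz' | hz' := hz'
    · obtain ⟨k, hmk, -, rfl⟩ := hsegr z hz'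
      obtain rfl | hmk := hmk.eq_or_lt
      exacts [rfl, absurd hz (hWr k hmk)]
    · exact absurd (.inl hz) (hJF z hz')
  · simp only [Walk.mem_support_append_iff] at hkW
    obtain hkW | hkW | hkW := hkW
    · exact hWr k (by omega) hkW
    · obtain ⟨k', -, hk', hkk'⟩ := hsegr _ hkW
      have := hr.injective hkk'
      omega
    · have := hJr k hkW
      omega

end Ray

end SimpleGraph

open SimpleGraph

theorem ray_through_infinitely_many_general {α : Type} (G : SimpleGraph α)
    (h2 : TwoConnected G) (hlf : ∀ v : α, (G.neighborSet v).Finite)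
    (U : Set α) (hU : U.Infinite) :
    ∃ r : ℕ → α, IsRay G r ∧ (U ∩ Set.range r).Infinite := by
  obtain ⟨hconn, -, h2⟩ := h2
  obtain ⟨v₀, -⟩ := hU.nonempty
  obtain ⟨r, hr⟩ := hconn.exists_isGeodesicComb hlf hU v₀
  by_cases hUr : (U ∩ Set.range r).Infinite
  · exact ⟨r, ⟨hr.injective, hr.adj⟩, hUr⟩
  have hr₀ : r 0 = v₀ := ((hconn.preconnected v₀ _).dist_eq_zero_iff.mp (hr.dist_eq 0)).symm
  refine exists_isRay_of_forall_extend
    (fun {x} W => W.IsPath ∧ ∃ m, r m = x ∧ ∀ k, m < k → r k ∉ W.support) (fun _ h => h.1)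
    ⟨v₀, .nil, .nil, 0, hr₀, fun k hk h => ?_⟩ ?_
  · have := hr.dist_eq k
    rw [show r k = v₀ from List.mem_singleton.mp h, dist_self] at this
    omega
  · rintro _ W ⟨hW, m, rfl, hWr⟩
    obtain ⟨j, q, hWq, hWqr, hnew⟩ :=
      hr.exists_extension hconn hlf h2 (Set.not_infinite.mp hUr) W hW hWr
    exact ⟨r j, q, ⟨hWq, j, rfl, hWqr⟩, hnew⟩

/-- Let `G` be a countable, 2-connected, locally finite graph and `U ⊆ V(G)`
infinite. Then `G` has a ray containing an infinite subset of `U`. -/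
theorem ray_through_infinitely_many {α : Type} [Countable α] (G : SimpleGraph α)
    (h2 : TwoConnected G) (hlf : ∀ v : α, (G.neighborSet v).Finite)
    (U : Set α) (hU : U.Infinite) :
    ∃ r : ℕ → α, IsRay G r ∧ (U ∩ Set.range r).Infinite :=
  ray_through_infinitely_many_general G h2 hlf U hU
end

section
/- None of the three graphs ω·K_3, ⋁K_3, K_{2,ω} is a minor of any of the other two. -/
/-- `ω · K₃`: the disjoint union of countably many triangles. -/
def omegaK3 : SimpleGraph (ℕ × Fin 3) := omegaCopies (⊤ : SimpleGraph (Fin 3))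

/-- `⋁ K₃`: the bouquet of infinitely many triangles, sharing exactly the
common vertex `none` and otherwise disjoint. -/
def bouquetK3 : SimpleGraph (Option (ℕ × Fin 2)) :=
  SimpleGraph.fromRel (fun a b => a = none ∨ ∃ n i j, a = some (n, i) ∧ b = some (n, j))

/-- `K_{2,ω}`: the complete bipartite graph with parts of sizes `2` and `ω`. -/
def K2omega : SimpleGraph (Fin 2 ⊕ ℕ) := completeBipartiteGraph (Fin 2) ℕ

lemma walk_const {β γ : Type*} {G : SimpleGraph β} {S : Set β} (f : β → γ)
    (hf : ∀ ⦃a b : β⦄, a ∈ S → b ∈ S → G.Adj a b → f a = f b)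
    {x y : S} (w : (G.induce S).Walk x y) : f x = f y := by
  induction w with
  | nil => rfl
  | cons h p ih => exact (hf (Subtype.prop _) (Subtype.prop _) h).trans ih

lemma const_on {β γ : Type*} (G : SimpleGraph β) (S : Set β) (f : β → γ)
    (hf : ∀ ⦃a b : β⦄, a ∈ S → b ∈ S → G.Adj a b → f a = f b)
    (hc : (G.induce S).Connected) {a b : β} (ha : a ∈ S) (hb : b ∈ S) : f a = f b := by
  obtain ⟨w⟩ := hc.preconnected ⟨a, ha⟩ ⟨b, hb⟩
  exact walk_const f hf w

lemma omegaK3_adj_fst {a b : ℕ × Fin 3} (h : omegaK3.Adj a b) : a.1 = b.1 := by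
  simp only [omegaK3, omegaCopies, SimpleGraph.fromRel_adj] at h
  rcases h with ⟨-, ⟨h, -⟩ | ⟨h, -⟩⟩ <;> omega

lemma omegaK3_adj {n : ℕ} {i j : Fin 3} (h : i ≠ j) : omegaK3.Adj (n, i) (n, j) := by
  simp only [omegaK3, omegaCopies, SimpleGraph.fromRel_adj]
  refine ⟨by simp [h], Or.inl ⟨trivial, by simpa using h⟩⟩

lemma bouquetK3_adj_some {p q : ℕ × Fin 2} (h : bouquetK3.Adj (some p) (some q)) :
    p.1 = q.1 := by
  simp only [bouquetK3, SimpleGraph.fromRel_adj] at h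
  rcases h with ⟨-, h | h⟩ <;>
    rcases h with h | ⟨n, i, j, h1, h2⟩ <;> simp_all

lemma bouquetK3_adj_none {p : ℕ × Fin 2} : bouquetK3.Adj none (some p) := by
  refine ⟨by simp, Or.inl (Or.inl rfl)⟩

lemma bouquetK3_adj_pair {n : ℕ} : bouquetK3.Adj (some (n, 0)) (some (n, 1)) := by
  refine ⟨by simp, Or.inl (Or.inr ⟨n, 0, 1, rfl, rfl⟩)⟩

lemma K2omega_adj {i : Fin 2} {n : ℕ} : K2omega.Adj (Sum.inl i) (Sum.inr n) := by
  simp [K2omega]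

lemma K2omega_adj_left {a b : Fin 2 ⊕ ℕ} (h : K2omega.Adj a b) :
    (∃ i, a = Sum.inl i) ∨ (∃ i, b = Sum.inl i) := by
  rcases a with i | m <;> rcases b with j | m' <;> simp_all [K2omega]

/-- In `bouquetK3`, a connected set avoiding `none` consists of `some`s with
constant first coordinate. -/
lemma bouquet_petal {S : Set (Option (ℕ × Fin 2))} (hS : none ∉ S)
    (hc : (bouquetK3.induce S).Connected) {p q : ℕ × Fin 2}
    (hp : some p ∈ S) (hq : some q ∈ S) : p.1 = q.1 := by
  have := const_on bouquetK3 S (fun o => (o.getD (0,0)).1) ?_ hc hp hq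
  · simpa using this
  · intro a b ha hb hab
    obtain ⟨a', rfl⟩ := Option.ne_none_iff_exists'.mp (fun h => hS (h ▸ ha))
    obtain ⟨b', rfl⟩ := Option.ne_none_iff_exists'.mp (fun h => hS (h ▸ hb))
    simpa using bouquetK3_adj_some hab

lemma mem_some {S : Set (Option (ℕ × Fin 2))} (hS : none ∉ S) {x : Option (ℕ × Fin 2)}
    (hx : x ∈ S) : ∃ p, x = some p :=
  Option.ne_none_iff_exists'.mp (fun h => hS (h ▸ hx))

/-- Three disjoint nonempty connected sets in `bouquetK3` avoiding `none`, with
edges from the first to each of the other two: impossible. -/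
lemma three_petals {S0 S1 S2 : Set (Option (ℕ × Fin 2))}
    (h0 : none ∉ S0) (h1 : none ∉ S1) (h2 : none ∉ S2)
    (hne0 : S0.Nonempty) (hne1 : S1.Nonempty) (hne2 : S2.Nonempty)
    (hc0 : (bouquetK3.induce S0).Connected) (hc1 : (bouquetK3.induce S1).Connected)
    (hc2 : (bouquetK3.induce S2).Connected)
    (hd01 : Disjoint S0 S1) (hd02 : Disjoint S0 S2) (hd12 : Disjoint S1 S2)
    (e01 : ∃ a ∈ S0, ∃ b ∈ S1, bouquetK3.Adj a b)
    (e02 : ∃ a ∈ S0, ∃ b ∈ S2, bouquetK3.Adj a b) : False := by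
  obtain ⟨x0, hx0⟩ := hne0; obtain ⟨x1, hx1⟩ := hne1; obtain ⟨x2, hx2⟩ := hne2
  obtain ⟨p0, rfl⟩ := mem_some h0 hx0
  obtain ⟨p1, rfl⟩ := mem_some h1 hx1
  obtain ⟨p2, rfl⟩ := mem_some h2 hx2
  obtain ⟨a, ha, b, hb, hab⟩ := e01
  obtain ⟨a', rfl⟩ := mem_some h0 ha
  obtain ⟨b', rfl⟩ := mem_some h1 hb
  obtain ⟨c, hc, d, hd, hcd⟩ := e02
  obtain ⟨c', rfl⟩ := mem_some h0 hc
  obtain ⟨d', rfl⟩ := mem_some h2 hd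
  have k01 : p0.1 = p1.1 := by
    have h1' := bouquet_petal h0 hc0 hx0 ha
    have h2' := bouquet_petal h1 hc1 hb hx1
    have := bouquetK3_adj_some hab
    omega
  have k02 : p0.1 = p2.1 := by
    have h1' := bouquet_petal h0 hc0 hx0 hc
    have h2' := bouquet_petal h2 hc2 hd hx2
    have := bouquetK3_adj_some hcd
    omega
  -- the three representatives are distinct elements of a 2-element fiber
  have d01 : p0 ≠ p1 := fun h => (Set.disjoint_left.mp hd01 hx0) (h ▸ hx1)
  have d02 : p0 ≠ p2 := fun h => (Set.disjoint_left.mp hd02 hx0) (h ▸ hx2)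
  have d12 : p1 ≠ p2 := fun h => (Set.disjoint_left.mp hd12 hx1) (h ▸ hx2)
  have e01' : p0.2 ≠ p1.2 := fun h => d01 (Prod.ext k01 h)
  have e02' : p0.2 ≠ p2.2 := fun h => d02 (Prod.ext k02 h)
  have e12' : p1.2 ≠ p2.2 := fun h => d12 (Prod.ext (k01 ▸ k02) h)
  have v0 := p0.2.isLt; have v1 := p1.2.isLt; have v2 := p2.2.isLt
  have w01 : p0.2.val ≠ p1.2.val := fun h => e01' (Fin.ext h)
  have w02 : p0.2.val ≠ p2.2.val := fun h => e02' (Fin.ext h)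
  have w12 : p1.2.val ≠ p2.2.val := fun h => e12' (Fin.ext h)
  omega

/-- A connected set in `omegaK3` has constant first coordinate. -/
lemma omega_triangle {S : Set (ℕ × Fin 3)} (hc : (omegaK3.induce S).Connected)
    {p q : ℕ × Fin 3} (hp : p ∈ S) (hq : q ∈ S) : p.1 = q.1 :=
  const_on omegaK3 S Prod.fst (fun _ _ _ _ h => omegaK3_adj_fst h) hc hp hq

/-- Four disjoint nonempty connected sets in `omegaK3`, with edges from the
first to each of the other three: impossible. -/
lemma four_triangles {S T0 T1 T2 : Set (ℕ × Fin 3)}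
    (hneS : S.Nonempty) (hne0 : T0.Nonempty) (hne1 : T1.Nonempty) (hne2 : T2.Nonempty)
    (hcS : (omegaK3.induce S).Connected) (hc0 : (omegaK3.induce T0).Connected)
    (hc1 : (omegaK3.induce T1).Connected) (hc2 : (omegaK3.induce T2).Connected)
    (hd0 : Disjoint S T0) (hd1 : Disjoint S T1) (hd2 : Disjoint S T2)
    (hd01 : Disjoint T0 T1) (hd02 : Disjoint T0 T2) (hd12 : Disjoint T1 T2)
    (e0 : ∃ a ∈ S, ∃ b ∈ T0, omegaK3.Adj a b)
    (e1 : ∃ a ∈ S, ∃ b ∈ T1, omegaK3.Adj a b)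
    (e2 : ∃ a ∈ S, ∃ b ∈ T2, omegaK3.Adj a b) : False := by
  obtain ⟨x, hx⟩ := hneS
  obtain ⟨y0, hy0⟩ := hne0; obtain ⟨y1, hy1⟩ := hne1; obtain ⟨y2, hy2⟩ := hne2
  have key : ∀ (T : Set (ℕ × Fin 3)), (omegaK3.induce T).Connected →
      ∀ y ∈ T, (∃ a ∈ S, ∃ b ∈ T, omegaK3.Adj a b) → y.1 = x.1 := by
    rintro T hcT y hy ⟨a, ha, b, hb, hab⟩
    have h1 := omega_triangle hcT hy hb
    have h2 := omegaK3_adj_fst hab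
    have h3 := omega_triangle hcS ha hx
    omega
  have k0 := key T0 hc0 y0 hy0 e0
  have k1 := key T1 hc1 y1 hy1 e1
  have k2 := key T2 hc2 y2 hy2 e2
  have d0 : x ≠ y0 := fun h => (Set.disjoint_left.mp hd0 hx) (h ▸ hy0)
  have d1 : x ≠ y1 := fun h => (Set.disjoint_left.mp hd1 hx) (h ▸ hy1)
  have d2 : x ≠ y2 := fun h => (Set.disjoint_left.mp hd2 hx) (h ▸ hy2)
  have d01 : y0 ≠ y1 := fun h => (Set.disjoint_left.mp hd01 hy0) (h ▸ hy1)
  have d02 : y0 ≠ y2 := fun h => (Set.disjoint_left.mp hd02 hy0) (h ▸ hy2)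
  have d12 : y1 ≠ y2 := fun h => (Set.disjoint_left.mp hd12 hy1) (h ▸ hy2)
  have vx := x.2.isLt; have v0 := y0.2.isLt; have v1 := y1.2.isLt; have v2 := y2.2.isLt
  have w0 : x.2.val ≠ y0.2.val := fun h => d0 (Prod.ext k0.symm (Fin.ext h))
  have w1 : x.2.val ≠ y1.2.val := fun h => d1 (Prod.ext k1.symm (Fin.ext h))
  have w2 : x.2.val ≠ y2.2.val := fun h => d2 (Prod.ext k2.symm (Fin.ext h))
  have w01 : y0.2.val ≠ y1.2.val := fun h => d01 (Prod.ext (by omega) (Fin.ext h))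
  have w02 : y0.2.val ≠ y2.2.val := fun h => d02 (Prod.ext (by omega) (Fin.ext h))
  have w12 : y1.2.val ≠ y2.2.val := fun h => d12 (Prod.ext (by omega) (Fin.ext h))
  omega

/-- Pigeonhole: a point lies in branch sets of at most one triangle. -/
lemma avoid_lemma {β : Type*} {B : ℕ × Fin 3 → Set β}
    (hd : Pairwise fun u v => Disjoint (B u) (B v)) (x : β) :
    ∃ N : ℕ, ∀ n, n ≠ N → ∀ i, x ∉ B (n, i) := by
  by_cases h : ∃ p, x ∈ B p
  · obtain ⟨p, hp⟩ := h
    refine ⟨p.1, fun n hn i hx => ?_⟩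
    exact Set.disjoint_left.mp (hd (fun hEq => hn (congrArg Prod.fst hEq))) hx hp
  · exact ⟨0, fun n _ i hx => h ⟨(n, i), hx⟩⟩

lemma avoid_lemma' {β γ : Type*} {B : γ ⊕ ℕ → Set β}
    (hd : Pairwise fun u v => Disjoint (B u) (B v)) (x : β) :
    ∃ N : ℕ, ∀ n, n ≠ N → x ∉ B (Sum.inr n) := by
  by_cases h : ∃ m, x ∈ B (Sum.inr m)
  · obtain ⟨m, hp⟩ := h
    refine ⟨m, fun n hn hx => ?_⟩
    exact Set.disjoint_left.mp (hd (by simp [hn])) hx hp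
  · exact ⟨0, fun n _ hx => h ⟨n, hx⟩⟩

/-- None of `ω·K₃`, `⋁K₃`, `K_{2,ω}` is a minor of any of the other two. -/
theorem excluded_minors_incomparable :
    ¬ IsMinor omegaK3 bouquetK3 ∧ ¬ IsMinor omegaK3 K2omega ∧
    ¬ IsMinor bouquetK3 omegaK3 ∧ ¬ IsMinor bouquetK3 K2omega ∧
    ¬ IsMinor K2omega omegaK3 ∧ ¬ IsMinor K2omega bouquetK3 := by
  refine ⟨?_, ?_, ?_, ?_, ?_, ?_⟩
  · -- ¬ IsMinor omegaK3 bouquetK3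
    rintro ⟨B, hne, hconn, hdisj, hadj⟩
    obtain ⟨N, hN⟩ := avoid_lemma hdisj (none : Option (ℕ × Fin 2))
    set n := N + 1 with hn
    have hn' : n ≠ N := by omega
    refine three_petals (S0 := B (n, 0)) (S1 := B (n, 1)) (S2 := B (n, 2))
      (hN n hn' 0) (hN n hn' 1) (hN n hn' 2) (hne _) (hne _) (hne _)
      (hconn _) (hconn _) (hconn _)
      (hdisj (by simp)) (hdisj (by simp)) (hdisj (by simp))
      (hadj (omegaK3_adj (by decide))) (hadj (omegaK3_adj (by decide)))
  · -- ¬ IsMinor omegaK3 K2omega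
    rintro ⟨B, hne, hconn, hdisj, hadj⟩
    obtain ⟨N1, hN1⟩ := avoid_lemma hdisj (Sum.inl 0 : Fin 2 ⊕ ℕ)
    obtain ⟨N2, hN2⟩ := avoid_lemma hdisj (Sum.inl 1 : Fin 2 ⊕ ℕ)
    set n := N1 + N2 + 1 with hn
    obtain ⟨a, ha, b, hb, hab⟩ := hadj (omegaK3_adj (n := n) (i := 0) (j := 1) (by decide))
    have key : ∀ i : Fin 2, ∀ j : Fin 3, Sum.inl i ∉ B (n, j) := by
      intro i j
      fin_cases i
      · exact hN1 n (by omega) j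
      · exact hN2 n (by omega) j
    rcases K2omega_adj_left hab with ⟨i, rfl⟩ | ⟨i, rfl⟩
    · exact key i 0 ha
    · exact key i 1 hb
  · -- ¬ IsMinor bouquetK3 omegaK3
    rintro ⟨B, hne, hconn, hdisj, hadj⟩
    refine four_triangles (S := B none) (T0 := B (some (0, 0))) (T1 := B (some (1, 0)))
      (T2 := B (some (2, 0))) (hne _) (hne _) (hne _) (hne _)
      (hconn _) (hconn _) (hconn _) (hconn _)
      (hdisj (by simp)) (hdisj (by simp)) (hdisj (by simp))
      (hdisj (by decide)) (hdisj (by decide)) (hdisj (by decide))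
      (hadj bouquetK3_adj_none) (hadj bouquetK3_adj_none) (hadj bouquetK3_adj_none)
  · -- ¬ IsMinor bouquetK3 K2omega
    rintro ⟨B, hne, hconn, hdisj, hadj⟩
    have key : ∀ m k : ℕ, m ≠ k → ∀ x : Fin 2 ⊕ ℕ,
        x ∈ B (some (m, 0)) ∪ B (some (m, 1)) →
        x ∈ B (some (k, 0)) ∪ B (some (k, 1)) → False := by
      intro m k hmk x hx hy
      rcases hx with hx | hx <;> rcases hy with hy | hy <;>
        exact Set.disjoint_left.mp (hdisj (by simp [hmk])) hx hy
    have get : ∀ m : ℕ, ∃ i : Fin 2,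
        Sum.inl i ∈ B (some (m, 0)) ∪ B (some (m, 1)) := by
      intro m
      obtain ⟨a, ha, b, hb, hab⟩ := hadj (bouquetK3_adj_pair (n := m))
      rcases K2omega_adj_left hab with ⟨i, rfl⟩ | ⟨i, rfl⟩
      · exact ⟨i, Or.inl ha⟩
      · exact ⟨i, Or.inr hb⟩
    obtain ⟨i0, h0⟩ := get 0
    obtain ⟨i1, h1⟩ := get 1
    obtain ⟨i2, h2⟩ := get 2
    have d01 : i0 ≠ i1 := fun h => key 0 1 (by omega) _ h0 (h ▸ h1)
    have d02 : i0 ≠ i2 := fun h => key 0 2 (by omega) _ h0 (h ▸ h2)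
    have d12 : i1 ≠ i2 := fun h => key 1 2 (by omega) _ h1 (h ▸ h2)
    have v0 := i0.isLt; have v1 := i1.isLt; have v2 := i2.isLt
    have w01 : i0.val ≠ i1.val := fun h => d01 (Fin.ext h)
    have w02 : i0.val ≠ i2.val := fun h => d02 (Fin.ext h)
    have w12 : i1.val ≠ i2.val := fun h => d12 (Fin.ext h)
    omega
  · -- ¬ IsMinor K2omega omegaK3
    rintro ⟨B, hne, hconn, hdisj, hadj⟩
    refine four_triangles (S := B (Sum.inl 0)) (T0 := B (Sum.inr 0)) (T1 := B (Sum.inr 1))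
      (T2 := B (Sum.inr 2)) (hne _) (hne _) (hne _) (hne _)
      (hconn _) (hconn _) (hconn _) (hconn _)
      (hdisj (by simp)) (hdisj (by simp)) (hdisj (by simp))
      (hdisj (by simp)) (hdisj (by simp)) (hdisj (by simp))
      (hadj K2omega_adj) (hadj K2omega_adj) (hadj K2omega_adj)
  · -- ¬ IsMinor K2omega bouquetK3
    rintro ⟨B, hne, hconn, hdisj, hadj⟩
    obtain ⟨ℓ, hℓ⟩ : ∃ ℓ : Fin 2, none ∉ B (Sum.inl ℓ) := by
      by_cases h : none ∈ B (Sum.inl 0)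
      · exact ⟨1, fun hx => Set.disjoint_left.mp (hdisj (by simp)) hx h⟩
      · exact ⟨0, h⟩
    obtain ⟨N, hN⟩ := avoid_lemma' hdisj (none : Option (ℕ × Fin 2))
    refine three_petals (S0 := B (Sum.inl ℓ)) (S1 := B (Sum.inr (N + 1)))
      (S2 := B (Sum.inr (N + 2))) hℓ (hN _ (by omega)) (hN _ (by omega))
      (hne _) (hne _) (hne _) (hconn _) (hconn _) (hconn _)
      (hdisj (by simp)) (hdisj (by simp)) (hdisj (by simp))
      (hadj K2omega_adj) (hadj K2omega_adj)
end
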